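/- Nonlocal estimate on the logarithmic blow-up function. Let Ω ⊂ ℝ^N be of class W^{2,∞}, assume (M), (J0), (J1). For x̄ ∈ Γ_in let r = r(x̄) be the radius of the W^{2,∞} boundary chart at x̄, and define U_r(x) = −log(d(x)) + (3/2) log r for x ∈ B_r(x̄) ∩ Ω. Then there exists a constant A > 0 such that for every ξ ≤ C_j⁻¹ r/2 and every x ∈ B_{r/2}(x̄) ∩ Ω, one has −I_ξ[U_r](x) ≥ −A d(x)^{−σ}, i.e. I_ξ[U_r](x) ≤ A d(x)^{−σ}. -/

import Mathlib

set_option autoImplicit false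

/- Common framework for censored nonlocal Hamilton–Jacobi equations with
Neumann boundary conditions (Barles-type viscosity solutions). -/

open Set Metric MeasureTheory Filter Topology Function
open scoped RealInnerProductSpace NNReal ENNReal

noncomputable section

namespace Censored

abbrev Euc (N : ℕ) : Type := EuclideanSpace ℝ (Fin N)

variable {N : ℕ}

/-- Signed distance to the boundary of `Ω`, positive inside `Ω`. -/
def sdist (Ω : Set (Euc N)) (x : Euc N) : ℝ := infDist x Ωᶜ - infDist x Ω

/-- A modulus of continuity. -/
def IsModulus (ω : ℝ → ℝ) : Prop :=
  (∀ s, 0 ≤ ω s) ∧ Monotone ω ∧ Tendsto ω (nhdsWithin 0 (Ioi 0)) (nhds 0)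

/-- A `W^{2,∞}` boundary chart for `Ω` at `s`, with radius `r`: a diffeomorphism of
class `W^{2,∞}` (i.e. `C^1` with Lipschitz differential, with inverse of the same
regularity) whose `N`-th component coincides with the signed distance. -/
def IsW2Chart (hN : 0 < N) (Ω : Set (Euc N)) (s : Euc N) (r : ℝ)
    (ψ ψinv : Euc N → Euc N) : Prop :=
  0 < r ∧
  ContDiffOn ℝ 1 ψ (ball s r) ∧
  (∃ L : ℝ≥0, LipschitzOnWith L (fun x => fderiv ℝ ψ x) (ball s r)) ∧
  ContDiffOn ℝ 1 ψinv (ψ '' ball s r) ∧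
  (∃ L : ℝ≥0, LipschitzOnWith L (fun x => fderiv ℝ ψinv x) (ψ '' ball s r)) ∧
  (∀ x ∈ ball s r, ψinv (ψ x) = x) ∧
  (∀ x ∈ ball s r, ψ x ⟨N - 1, Nat.sub_lt hN Nat.one_pos⟩ = sdist Ω x)

/-- Assumption (O): `Ω` is open of class `W^{2,∞}`. -/
def IsW2Domain (hN : 0 < N) (Ω : Set (Euc N)) : Prop :=
  IsOpen Ω ∧ ∀ s ∈ frontier Ω, ∃ r ψ ψinv, IsW2Chart hN Ω s r ψ ψinv

/-- `n` is the exterior unit normal vector field to `∂Ω`:  `n = -D d` where `d` is the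
signed distance (positive inside). -/
def IsExteriorNormal (Ω : Set (Euc N)) (n : Euc N → Euc N) : Prop :=
  ∀ x ∈ frontier Ω, ‖n x‖ = 1 ∧ HasGradientAt (sdist Ω) (-(n x)) x

/-- First part of assumption (M): the measures `μ_x` have a (measurable, nonnegative)
density `g x` with respect to Lebesgue measure, bounded by `Cμ |z|^{-(N+σ)}`. -/
def AssumptionM1 (Ω : Set (Euc N)) (g : Euc N → Euc N → ℝ) (Cμ σ : ℝ) : Prop :=
  0 < Cμ ∧ σ ∈ Ioo (0:ℝ) 1 ∧ (∀ x, Measurable (g x)) ∧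
  (∀ x ∈ closure Ω, ∀ z : Euc N, 0 ≤ g x z) ∧
  (∀ x ∈ closure Ω, ∀ z : Euc N, g x z ≤ Cμ * ‖z‖ ^ (-((N : ℝ) + σ)))

/-- Assumption (M). -/
def AssumptionM (Ω : Set (Euc N)) (g : Euc N → Euc N → ℝ) (Cμ Dμ σ : ℝ) : Prop :=
  AssumptionM1 Ω g Cμ σ ∧ 0 < Dμ ∧
  (∀ x ∈ closure Ω, ∀ y ∈ closure Ω, ∀ z : Euc N,
    |g x z - g y z| ≤ Dμ * ‖x - y‖ * ‖z‖ ^ (-((N : ℝ) + σ)))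

/-- Assumption (J0). -/
def AssumptionJ0 (Ω : Set (Euc N)) (j : Euc N → Euc N → Euc N) (Aj : ℝ) : Prop :=
  ∀ x ∈ closure Ω,
    ContDiff ℝ 1 (j x) ∧ Function.Bijective (j x) ∧
    ContDiff ℝ 1 (Function.invFun (j x)) ∧
    ∀ z : Euc N, ‖fderiv ℝ (Function.invFun (j x)) z‖ ≤ Aj

/-- Assumption (J1). -/
def AssumptionJ1 (Ω : Set (Euc N)) (j : Euc N → Euc N → Euc N) (Cj' Cj Dj : ℝ) : Prop :=
  0 < Cj' ∧ 0 < Cj ∧ 0 < Dj ∧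
  (∀ x ∈ closure Ω, ∀ z : Euc N, Cj' * ‖z‖ ≤ ‖j x z‖ ∧ ‖j x z‖ ≤ Cj * ‖z‖) ∧
  (∀ x ∈ closure Ω, ∀ y ∈ closure Ω, ∀ z : Euc N, ‖j x z - j y z‖ ≤ Dj * ‖z‖ * ‖x - y‖)

/-- The truncated censored nonlocal term over `{|z| ≥ ξ}` (`I^ξ`). -/
def Iout (Ω : Set (Euc N)) (j : Euc N → Euc N → Euc N) (g : Euc N → Euc N → ℝ)
    (ξ : ℝ) (u : Euc N → ℝ) (x : Euc N) : ℝ :=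
  ∫ z in {z : Euc N | ξ ≤ ‖z‖ ∧ x + j x z ∈ closure Ω}, (u (x + j x z) - u x) * g x z

/-- The truncated censored nonlocal term over `{|z| < ξ}` (`I_ξ`). -/
def Iin (Ω : Set (Euc N)) (j : Euc N → Euc N → Euc N) (g : Euc N → Euc N → ℝ)
    (ξ : ℝ) (φ : Euc N → ℝ) (x : Euc N) : ℝ :=
  ∫ z in {z : Euc N | ‖z‖ < ξ ∧ x + j x z ∈ closure Ω}, (φ (x + j x z) - φ x) * g x z

/-- The censored nonlocal operator of order `σ < 1`, as a principal value. -/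
def Ipv (Ω : Set (Euc N)) (j : Euc N → Euc N → Euc N) (g : Euc N → Euc N → ℝ)
    (u : Euc N → ℝ) (x : Euc N) : ℝ :=
  limUnder (nhdsWithin (0:ℝ) (Ioi 0)) (fun δ =>
    ∫ z in {z : Euc N | δ < ‖z‖ ∧ x + j x z ∈ closure Ω}, (u (x + j x z) - u x) * g x z)

/-- `u` is bounded on `S`. -/
def BddOn (u : Euc N → ℝ) (S : Set (Euc N)) : Prop := ∃ M, ∀ x ∈ S, |u x| ≤ M

/-- `u = u(x,t)` is bounded on `S × I`. -/
def BddOnT (u : Euc N → ℝ → ℝ) (S : Set (Euc N)) (I : Set ℝ) : Prop :=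
  ∃ M, ∀ x ∈ S, ∀ t ∈ I, |u x t| ≤ M

/-- Viscosity subsolution, with generalized Neumann boundary conditions, of the
stationary equation `F(x, u, Du, I[u]) = 0` in `Ω`, `∂u/∂n = 0` on `∂Ω`,
for the censored operator determined by `j, g` (with constant `Cj` from (J1)). -/
def IsSubSol (Ω : Set (Euc N)) (j : Euc N → Euc N → Euc N) (g : Euc N → Euc N → ℝ)
    (n : Euc N → Euc N) (Cj : ℝ) (F : Euc N → ℝ → Euc N → ℝ → ℝ) (u : Euc N → ℝ) : Prop :=
  ∀ ξ > (0:ℝ), ∀ φ : Euc N → ℝ, ContDiff ℝ 1 φ →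
    ∀ x ∈ closure Ω,
      (∀ y ∈ closedBall x (Cj * ξ) ∩ closure Ω, u y - φ y ≤ u x - φ x) →
      (x ∈ Ω → F x (u x) (gradient φ x) (Iin Ω j g ξ φ x + Iout Ω j g ξ u x) ≤ 0) ∧
      (x ∈ frontier Ω →
        min (F x (u x) (gradient φ x) (Iin Ω j g ξ φ x + Iout Ω j g ξ u x))
          ⟪gradient φ x, n x⟫ ≤ 0)

/-- Viscosity supersolution, with generalized Neumann boundary conditions. -/
def IsSuperSol (Ω : Set (Euc N)) (j : Euc N → Euc N → Euc N) (g : Euc N → Euc N → ℝ)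
    (n : Euc N → Euc N) (Cj : ℝ) (F : Euc N → ℝ → Euc N → ℝ → ℝ) (v : Euc N → ℝ) : Prop :=
  ∀ ξ > (0:ℝ), ∀ φ : Euc N → ℝ, ContDiff ℝ 1 φ →
    ∀ x ∈ closure Ω,
      (∀ y ∈ closedBall x (Cj * ξ) ∩ closure Ω, v x - φ x ≤ v y - φ y) →
      (x ∈ Ω → 0 ≤ F x (v x) (gradient φ x) (Iin Ω j g ξ φ x + Iout Ω j g ξ v x)) ∧
      (x ∈ frontier Ω →
        0 ≤ max (F x (v x) (gradient φ x) (Iin Ω j g ξ φ x + Iout Ω j g ξ v x))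
          ⟪gradient φ x, n x⟫)

/-- `F` corresponding to the stationary equation `u - I[u] + H(x,Du) = 0`. -/
def statF (H : Euc N → Euc N → ℝ) : Euc N → ℝ → Euc N → ℝ → ℝ :=
  fun x r p I => r - I + H x p

/-- `F` corresponding to the ergodic equation `λ - I[w] - H(x,Dw) = 0`. -/
def ergF (H : Euc N → Euc N → ℝ) (lam : ℝ) : Euc N → ℝ → Euc N → ℝ → ℝ :=
  fun x _ p I => lam - I - H x p

/-- Parabolic viscosity subsolution with generalized Neumann boundary conditions,
for `F(x, t, ∂_t u, u, Du, I[u(·,t)]) = 0` in `Ω × (0,∞)`. -/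
def IsParSubSol (Ω : Set (Euc N)) (j : Euc N → Euc N → Euc N) (g : Euc N → Euc N → ℝ)
    (n : Euc N → Euc N) (Cj : ℝ) (F : Euc N → ℝ → ℝ → ℝ → Euc N → ℝ → ℝ)
    (u : Euc N → ℝ → ℝ) : Prop :=
  ∀ ξ > (0:ℝ), ∀ φ : Euc N → ℝ → ℝ,
    ContDiff ℝ 1 (fun q : Euc N × ℝ => φ q.1 q.2) →
    ∀ x ∈ closure Ω, ∀ t ∈ Ioi (0:ℝ),
      (∀ y ∈ closedBall x (Cj * ξ) ∩ closure Ω, ∀ s ∈ Ioi (0:ℝ), |s - t| ≤ ξ →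
        u y s - φ y s ≤ u x t - φ x t) →
      (x ∈ Ω →
        F x t (deriv (φ x) t) (u x t) (gradient (fun y => φ y t) x)
          (Iin Ω j g ξ (fun y => φ y t) x + Iout Ω j g ξ (fun y => u y t) x) ≤ 0) ∧
      (x ∈ frontier Ω →
        min (F x t (deriv (φ x) t) (u x t) (gradient (fun y => φ y t) x)
              (Iin Ω j g ξ (fun y => φ y t) x + Iout Ω j g ξ (fun y => u y t) x))
          ⟪gradient (fun y => φ y t) x, n x⟫ ≤ 0)

/-- Parabolic viscosity supersolution with generalized Neumann boundary conditions. -/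
def IsParSuperSol (Ω : Set (Euc N)) (j : Euc N → Euc N → Euc N) (g : Euc N → Euc N → ℝ)
    (n : Euc N → Euc N) (Cj : ℝ) (F : Euc N → ℝ → ℝ → ℝ → Euc N → ℝ → ℝ)
    (v : Euc N → ℝ → ℝ) : Prop :=
  ∀ ξ > (0:ℝ), ∀ φ : Euc N → ℝ → ℝ,
    ContDiff ℝ 1 (fun q : Euc N × ℝ => φ q.1 q.2) →
    ∀ x ∈ closure Ω, ∀ t ∈ Ioi (0:ℝ),
      (∀ y ∈ closedBall x (Cj * ξ) ∩ closure Ω, ∀ s ∈ Ioi (0:ℝ), |s - t| ≤ ξ →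
        v x t - φ x t ≤ v y s - φ y s) →
      (x ∈ Ω →
        0 ≤ F x t (deriv (φ x) t) (v x t) (gradient (fun y => φ y t) x)
          (Iin Ω j g ξ (fun y => φ y t) x + Iout Ω j g ξ (fun y => v y t) x)) ∧
      (x ∈ frontier Ω →
        0 ≤ max (F x t (deriv (φ x) t) (v x t) (gradient (fun y => φ y t) x)
              (Iin Ω j g ξ (fun y => φ y t) x + Iout Ω j g ξ (fun y => v y t) x))
          ⟪gradient (fun y => φ y t) x, n x⟫)

/-- `F` for the parabolic equation `∂_t u - I[u] + H(x,t,u,Du) = 0`. -/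
def parF (H : Euc N → ℝ → ℝ → Euc N → ℝ) : Euc N → ℝ → ℝ → ℝ → Euc N → ℝ → ℝ :=
  fun x t pt r p I => pt - I + H x t r p

/-! ### Hamiltonians: Bellman form and coercive form (stationary) -/




/-- `H` is of Bellman type with drift `b` and cost `l` over the control set `A`. -/
def IsBellman {A : Type} (b : Euc N → A → Euc N) (l : Euc N → A → ℝ)
    (H : Euc N → Euc N → ℝ) : Prop :=
  ∀ x p, H x p = ⨆ α : A, (-⟪b x α, p⟫ - l x α)

/-- Continuity and boundedness of the Bellman data `b, l`. -/
def BellmanData {A : Type} [TopologicalSpace A]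
    (b : Euc N → A → Euc N) (l : Euc N → A → ℝ) : Prop :=
  Continuous (fun q : Euc N × A => b q.1 q.2) ∧ (∃ M, ∀ x α, ‖b x α‖ ≤ M) ∧
  Continuous (fun q : Euc N × A => l q.1 q.2) ∧ (∃ M, ∀ x α, |l x α| ≤ M)

/-- Assumption (C): uniform continuity of the cost `l`. -/
def AssumptionC (Ω : Set (Euc N)) {A : Type} (l : Euc N → A → ℝ) : Prop :=
  ∃ ω, IsModulus ω ∧ ∀ (α : A), ∀ x ∈ closure Ω, ∀ y ∈ closure Ω,
    |l x α - l y α| ≤ ω ‖x - y‖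

/-- Assumption (L): uniform Lipschitz continuity of the drift `b`. -/
def AssumptionL (Ω : Set (Euc N)) {A : Type} (b : Euc N → A → Euc N) : Prop :=
  ∃ C > (0:ℝ), ∀ (α : A), ∀ x ∈ closure Ω, ∀ y ∈ closure Ω,
    ‖b x α - b y α‖ ≤ C * ‖x - y‖

/-- The part of the boundary where the drift points inwards for every control. -/
def GammaIn (Ω : Set (Euc N)) (n : Euc N → Euc N) {A : Type}
    (b : Euc N → A → Euc N) : Set (Euc N) :=
  {x | x ∈ frontier Ω ∧ ∀ α : A, ⟪b x α, n x⟫ < 0}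

/-- The part of the boundary where the drift points outwards for every control. -/
def GammaOut (Ω : Set (Euc N)) (n : Euc N → Euc N) {A : Type}
    (b : Euc N → A → Euc N) : Set (Euc N) :=
  {x | x ∈ frontier Ω ∧ ∀ α : A, 0 < ⟪b x α, n x⟫}

/-- The part of the boundary where the drift points both inwards and outwards. -/
def GammaMix (Ω : Set (Euc N)) (n : Euc N → Euc N) {A : Type}
    (b : Euc N → A → Euc N) : Set (Euc N) :=
  {x | x ∈ frontier Ω ∧ ∃ α₁ α₂ : A, ⟪b x α₁, n x⟫ < 0 ∧ 0 < ⟪b x α₂, n x⟫}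

/-- `S` is a union of connected components of `T`. -/
def IsUnionOfComponents (S T : Set (Euc N)) : Prop :=
  S ⊆ T ∧ ∀ x ∈ S, connectedComponentIn T x ⊆ S

/-- Assumption (B). -/
def AssumptionB (Ω : Set (Euc N)) (n : Euc N → Euc N) {A : Type}
    (b : Euc N → A → Euc N) : Prop :=
  GammaIn Ω n b ∪ GammaOut Ω n b ∪ GammaMix Ω n b = frontier Ω ∧
  IsUnionOfComponents (GammaIn Ω n b) (frontier Ω) ∧
  IsUnionOfComponents (GammaOut Ω n b) (frontier Ω) ∧
  IsUnionOfComponents (GammaMix Ω n b) (frontier Ω)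

/-- All the structural assumptions on a Bellman Hamiltonian: (C), (L), (B) together
with continuity and boundedness of the data. -/
def StatBellmanOK (Ω : Set (Euc N)) (n : Euc N → Euc N) {A : Type} [TopologicalSpace A]
    (b : Euc N → A → Euc N) (l : Euc N → A → ℝ) (H : Euc N → Euc N → ℝ) : Prop :=
  BellmanData b l ∧ IsBellman b l H ∧ AssumptionC Ω l ∧ AssumptionL Ω b ∧ AssumptionB Ω n b

/-- Assumption (H1): superfractional coercivity of order `m > σ`. -/
def AssumptionH1 (Ω : Set (Euc N)) (H : Euc N → Euc N → ℝ) (σ m c₀ D : ℝ) : Prop :=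
  σ < m ∧ 0 < c₀ ∧ 0 < D ∧ ∀ x ∈ closure Ω, ∀ p : Euc N, c₀ * ‖p‖ ^ m - D ≤ H x p

/-- Assumption (Ha) (sublinear case) with constant `C` and modulus `ω₁`. -/
def AssumptionHa (H : Euc N → Euc N → ℝ) (C : ℝ) (ω₁ : ℝ → ℝ) : Prop :=
  0 < C ∧ IsModulus ω₁ ∧
  ∀ x y p q : Euc N, H y p - H x q ≤ ω₁ ‖x - y‖ * (1 + ‖p‖) + C * ‖p - q‖

/-- Assumption (Hb) (superlinear case) with constants `m, A, Cb`. -/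
def AssumptionHb (H : Euc N → Euc N → ℝ) (m A Cb : ℝ) : Prop :=
  1 < m ∧ 0 < A ∧ 0 < Cb ∧
  ∀ μ ∈ Ioo (0:ℝ) 1, ∀ x p : Euc N,
    H x p - μ * H x (μ⁻¹ • p) ≤ (1 - μ) * (Cb * (1 - m) * ‖p‖ ^ m + A)

/-- Assumption (Hc) with constant `C` and modulus `ω₁`. -/
def AssumptionHc (H : Euc N → Euc N → ℝ) (m C : ℝ) (ω₁ : ℝ → ℝ) : Prop :=
  0 < C ∧ IsModulus ω₁ ∧
  ∀ x y p q : Euc N,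
    H y p - H x q ≤ ω₁ ‖x - y‖ * (1 + (max ‖p‖ ‖q‖) ^ m)
      + C * ‖p - q‖ * (max ‖p‖ ‖q‖) ^ (m - 1)

/-- The structural assumptions on a coercive Hamiltonian:
(H1), (Ha) (sublinear) or (H1), (Hb), (Hc) (superlinear). -/
def StatCoerciveOK (Ω : Set (Euc N)) (H : Euc N → Euc N → ℝ) (σ : ℝ) : Prop :=
  ∃ m c₀ D, AssumptionH1 Ω H σ m c₀ D ∧
    ((m ≤ 1 ∧ ∃ C ω₁, AssumptionHa H C ω₁) ∨
     (∃ A Cb, AssumptionHb H m A Cb ∧ ∃ C ω₁, AssumptionHc H m C ω₁))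

/-- Assumption (E). -/
def AssumptionE (Ω : Set (Euc N)) (H : Euc N → Euc N → ℝ) : Prop :=
  ∀ R > (0:ℝ), ∃ HR : ℝ, ∀ x ∈ closure Ω, ∀ p : Euc N, ‖p‖ ≤ R → |H x p| ≤ HR

/-! ### Parabolic Hamiltonians and assumptions -/

/-- `H(x,t,r,p)` is of (time-dependent) Bellman type. -/
def IsParBellman {A : Type} (lam : Euc N → ℝ → A → ℝ) (b : Euc N → ℝ → A → Euc N)
    (l : Euc N → ℝ → A → ℝ) (H : Euc N → ℝ → ℝ → Euc N → ℝ) : Prop :=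
  ∀ x t r p, H x t r p = ⨆ α : A, (lam x t α * r - ⟪b x t α, p⟫ - l x t α)

/-- Continuity and boundedness of the parabolic Bellman data. -/
def ParBellmanData {A : Type} [TopologicalSpace A] (lam : Euc N → ℝ → A → ℝ)
    (b : Euc N → ℝ → A → Euc N) (l : Euc N → ℝ → A → ℝ) : Prop :=
  Continuous (fun q : Euc N × ℝ × A => lam q.1 q.2.1 q.2.2) ∧
  (∃ M, ∀ x t α, |lam x t α| ≤ M) ∧
  Continuous (fun q : Euc N × ℝ × A => b q.1 q.2.1 q.2.2) ∧
  (∃ M, ∀ x t α, ‖b x t α‖ ≤ M) ∧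
  Continuous (fun q : Euc N × ℝ × A => l q.1 q.2.1 q.2.2) ∧
  (∃ M, ∀ x t α, |l x t α| ≤ M)

/-- Assumption (C'): uniform continuity of `l` and `λ` in `(x,t)`, uniformly in `α`. -/
def AssumptionC' (Ω : Set (Euc N)) {A : Type} (lam l : Euc N → ℝ → A → ℝ) : Prop :=
  (∃ ω, IsModulus ω ∧ ∀ (α : A), ∀ x ∈ closure Ω, ∀ y ∈ closure Ω,
      ∀ t ∈ Ici (0:ℝ), ∀ s ∈ Ici (0:ℝ), |l x t α - l y s α| ≤ ω (‖x - y‖ + |t - s|)) ∧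
  (∃ ω, IsModulus ω ∧ ∀ (α : A), ∀ x ∈ closure Ω, ∀ y ∈ closure Ω,
      ∀ t ∈ Ici (0:ℝ), ∀ s ∈ Ici (0:ℝ), |lam x t α - lam y s α| ≤ ω (‖x - y‖ + |t - s|))

/-- Assumption (L'): uniform Lipschitz continuity of the drift `b` in `(x,t)`. -/
def AssumptionL' (Ω : Set (Euc N)) {A : Type} (b : Euc N → ℝ → A → Euc N) : Prop :=
  ∃ C > (0:ℝ), ∀ (α : A), ∀ x ∈ closure Ω, ∀ y ∈ closure Ω, ∀ s ∈ Ici (0:ℝ), ∀ t ∈ Ici (0:ℝ),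
    ‖b x s α - b y t α‖ ≤ C * (‖x - y‖ + |s - t|)

/-- Inward part of the boundary for time-dependent drift. -/
def GammaInT (Ω : Set (Euc N)) (n : Euc N → Euc N) {A : Type}
    (b : Euc N → ℝ → A → Euc N) : Set (Euc N) :=
  {x | x ∈ frontier Ω ∧ ∀ t ∈ Ici (0:ℝ), ∀ α : A, ⟪b x t α, n x⟫ < 0}

/-- Outward part of the boundary for time-dependent drift. -/
def GammaOutT (Ω : Set (Euc N)) (n : Euc N → Euc N) {A : Type}
    (b : Euc N → ℝ → A → Euc N) : Set (Euc N) :=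
  {x | x ∈ frontier Ω ∧ ∀ t ∈ Ici (0:ℝ), ∀ α : A, 0 < ⟪b x t α, n x⟫}

/-- Mixed part of the boundary for time-dependent drift. -/
def GammaMixT (Ω : Set (Euc N)) (n : Euc N → Euc N) {A : Type}
    (b : Euc N → ℝ → A → Euc N) : Set (Euc N) :=
  {x | x ∈ frontier Ω ∧ ∀ t ∈ Ici (0:ℝ),
    ∃ α₁ α₂ : A, ⟪b x t α₁, n x⟫ < 0 ∧ 0 < ⟪b x t α₂, n x⟫}

/-- Assumption (B'). -/
def AssumptionB' (Ω : Set (Euc N)) (n : Euc N → Euc N) {A : Type}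
    (b : Euc N → ℝ → A → Euc N) : Prop :=
  GammaInT Ω n b ∪ GammaOutT Ω n b ∪ GammaMixT Ω n b = frontier Ω ∧
  IsUnionOfComponents (GammaInT Ω n b) (frontier Ω) ∧
  IsUnionOfComponents (GammaOutT Ω n b) (frontier Ω) ∧
  IsUnionOfComponents (GammaMixT Ω n b) (frontier Ω)

/-- All the structural assumptions on a parabolic Bellman Hamiltonian: (C'), (L'), (B'). -/
def ParBellmanOK (Ω : Set (Euc N)) (n : Euc N → Euc N) {A : Type} [TopologicalSpace A]
    (lam : Euc N → ℝ → A → ℝ) (b : Euc N → ℝ → A → Euc N) (l : Euc N → ℝ → A → ℝ)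
    (H : Euc N → ℝ → ℝ → Euc N → ℝ) : Prop :=
  ParBellmanData lam b l ∧ IsParBellman lam b l H ∧
  AssumptionC' Ω lam l ∧ AssumptionL' Ω b ∧ AssumptionB' Ω n b

/-- Assumption (H'): monotonicity of `H` in the `u` variable. -/
def AssumptionH' (Ω : Set (Euc N)) (H : Euc N → ℝ → ℝ → Euc N → ℝ) : Prop :=
  ∃ K : ℝ, ∀ R > (0:ℝ), ∃ γ, -K ≤ γ ∧
    ∀ x ∈ closure Ω, ∀ t ∈ Icc (0:ℝ) R, ∀ r s : ℝ, |r| ≤ R → |s| ≤ R → s ≤ r →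
      ∀ p : Euc N, γ * (r - s) ≤ H x t r p - H x t s p

/-- Assumption (H''): the monotonicity constants `γ_R` are bounded below by some `γ₀ > 0`. -/
def AssumptionH'' (Ω : Set (Euc N)) (H : Euc N → ℝ → ℝ → Euc N → ℝ) : Prop :=
  ∃ γ₀ > (0:ℝ), ∀ R > (0:ℝ), ∃ γ, γ₀ ≤ γ ∧
    ∀ x ∈ closure Ω, ∀ t ∈ Icc (0:ℝ) R, ∀ r s : ℝ, |r| ≤ R → |s| ≤ R → s ≤ r →
      ∀ p : Euc N, γ * (r - s) ≤ H x t r p - H x t s p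

/-- Assumption (E'). -/
def AssumptionE' (Ω : Set (Euc N)) (H : Euc N → ℝ → ℝ → Euc N → ℝ) : Prop :=
  ∀ T > (0:ℝ), ∀ R > (0:ℝ), ∃ HR : ℝ, ∀ x ∈ Ω, ∀ t ∈ Icc (0:ℝ) T, ∀ r : ℝ, ∀ p : Euc N,
    |r| ≤ R → ‖p‖ ≤ R → |H x t r p| ≤ HR

/-- Assumption (H0'): separated structure `H(x,t,r,p) = H₀(x,r,p) - f(x,t)`. -/
def AssumptionH0' (H : Euc N → ℝ → ℝ → Euc N → ℝ) : Prop :=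
  ∃ (H₀ : Euc N → ℝ → Euc N → ℝ) (f : Euc N → ℝ → ℝ),
    Continuous (fun q : Euc N × ℝ × Euc N => H₀ q.1 q.2.1 q.2.2) ∧
    UniformContinuous (fun q : Euc N × ℝ => f q.1 q.2) ∧
    (∃ M, ∀ x t, |f x t| ≤ M) ∧
    ∀ x t r p, H x t r p = H₀ x r p - f x t

/-- Assumption (He'): `H` satisfies (H1), (Ha) in `x`, uniformly in `t`
and uniformly on compact sets in `r` (sublinearly coercive case). -/
def AssumptionHe' (Ω : Set (Euc N)) (H : Euc N → ℝ → ℝ → Euc N → ℝ) (σ : ℝ) : Prop :=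
  ∃ m : ℝ, σ < m ∧ m ≤ 1 ∧
    ∀ R > (0:ℝ),
      (∃ c₀ > (0:ℝ), ∃ D > (0:ℝ), ∀ x ∈ closure Ω, ∀ t ∈ Ici (0:ℝ), ∀ r : ℝ, |r| ≤ R →
        ∀ p : Euc N, c₀ * ‖p‖ ^ m - D ≤ H x t r p) ∧
      (∃ C > (0:ℝ), ∃ ω₁, IsModulus ω₁ ∧ ∀ x y : Euc N, ∀ t ∈ Ici (0:ℝ), ∀ r : ℝ, |r| ≤ R →
        ∀ p q : Euc N, H y t r p - H x t r q ≤ ω₁ ‖x - y‖ * (1 + ‖p‖) + C * ‖p - q‖)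

/-- Assumption (He''): `H` satisfies (H1), (Hb), (Hc) in `x`, uniformly in `t`
and uniformly on compact sets in `r` (superlinearly coercive case, exponent `m`). -/
def AssumptionHe'' (Ω : Set (Euc N)) (H : Euc N → ℝ → ℝ → Euc N → ℝ) (σ m : ℝ) : Prop :=
  1 < m ∧ σ < m ∧
  ∀ R > (0:ℝ),
    (∃ c₀ > (0:ℝ), ∃ D > (0:ℝ), ∀ x ∈ closure Ω, ∀ t ∈ Ici (0:ℝ), ∀ r : ℝ, |r| ≤ R →
      ∀ p : Euc N, c₀ * ‖p‖ ^ m - D ≤ H x t r p) ∧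
    (∃ A > (0:ℝ), ∃ Cb > (0:ℝ), ∀ μ ∈ Ioo (0:ℝ) 1, ∀ x ∈ closure Ω, ∀ t ∈ Ici (0:ℝ),
      ∀ r : ℝ, |r| ≤ R → ∀ p : Euc N,
        H x t r p - μ * H x t r (μ⁻¹ • p) ≤ (1 - μ) * (Cb * (1 - m) * ‖p‖ ^ m + A)) ∧
    (∃ C > (0:ℝ), ∃ ω₁, IsModulus ω₁ ∧ ∀ x y : Euc N, ∀ t ∈ Ici (0:ℝ), ∀ r : ℝ, |r| ≤ R →
      ∀ p q : Euc N, H y t r p - H x t r q ≤ ω₁ ‖x - y‖ * (1 + (max ‖p‖ ‖q‖) ^ m)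
        + C * ‖p - q‖ * (max ‖p‖ ‖q‖) ^ (m - 1))

/-- Structural parabolic coercive assumptions: (H0') and (He') or (He''). -/
def ParCoerciveOK (Ω : Set (Euc N)) (H : Euc N → ℝ → ℝ → Euc N → ℝ) (σ : ℝ) : Prop :=
  AssumptionH0' H ∧ (AssumptionHe' Ω H σ ∨ ∃ m, AssumptionHe'' Ω H σ m)

/-! ### Iterative covering property -/

/-- The iterated reachable sets `X_r(x)` of the censored jump process. -/
def Xiter (Ω : Set (Euc N)) (j : Euc N → Euc N → Euc N) (g : Euc N → Euc N → ℝ)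
    (x : Euc N) : ℕ → Set (Euc N)
  | 0 => {x}
  | r + 1 => (⋃ ξ ∈ Xiter Ω j g x r,
      (fun z => ξ + j ξ z) '' closure (Function.support (g ξ))) ∩ closure Ω

/-- Iterative covering property: `𝒳(x) = Ω` (i.e. the closure of the reachable set
is all of `closure Ω`) for every `x ∈ Ω`. -/
def CoveringProperty (Ω : Set (Euc N)) (j : Euc N → Euc N → Euc N)
    (g : Euc N → Euc N → ℝ) : Prop :=
  ∀ x ∈ Ω, closure (⋃ r : ℕ, Xiter Ω j g x r) = closure Ω

end Censored

/-!
Write `d = sdist Ω`, `D = d x` and `y = x + j x z`. The increment of `-log d` is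
`log D - log (d y)`, so by (M) and (J1) the integrand of `I_ξ` is at most a constant times
`logKernel Ω σ x y = (log D - log (d y))⁺ * |y - x| ^ (-(N + σ))`, and by (J0) the change of
variables `z ↦ y` costs a factor `A_j ^ N`. The kernel is integrated over `B_r(x̄) ∩ closure Ω`
in three pieces, each `O(D ^ (-σ))`:
* near `x` (`d y ≥ D / 2`, `|y - x| ≤ D`) the logarithm is Lipschitz, `≤ 2 |y - x| / D`, which
  leaves the integrable singularity `|y - x| ^ (1 - N - σ)`;
* far from `x` (`|y - x| ≥ D`) the logarithm is bounded and `|y - x| ^ (-(N + σ))` is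
  integrable at infinity;
* in the boundary layer `0 < d y < D / 2`, `log (D / d y) ≤ 2 (D / d y) ^ (1/2)`. In the
  `W^{2,∞}` chart `d` is a coordinate, so the layer `{0 < d < t}` meets a ball of radius `ρ` in
  volume `O(ρ ^ (N - 1) * t)`; dyadic decompositions in `d` and in `|y - x|` then bound this
  piece by `O(D ^ (1/2) * D ^ (-1/2 - σ))`.
-/

open Module

lemma ofReal_integral_le_lintegral_ofReal {α : Type*} [MeasurableSpace α] (μ : Measure α)
    (f : α → ℝ) : ENNReal.ofReal (∫ a, f a ∂μ) ≤ ∫⁻ a, ENNReal.ofReal (f a) ∂μ := by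
  refine ENNReal.ofReal_le_of_le_toReal ?_
  by_cases hf : Integrable f μ
  · rw [integral_eq_lintegral_pos_part_sub_lintegral_neg_part hf]
    exact sub_le_self _ ENNReal.toReal_nonneg
  · rw [integral_undef hf]
    exact ENNReal.toReal_nonneg

lemma setLIntegral_le_mul_measure {α : Type*} [MeasurableSpace α] {μ : Measure α} {s : Set α}
    (hs : MeasurableSet s) {f : α → ℝ≥0∞} {a : ℝ≥0∞} (hf : ∀ y ∈ s, f y ≤ a) :
    ∫⁻ y in s, f y ∂μ ≤ a * μ s :=
  (setLIntegral_mono' hs hf).trans_eq (setLIntegral_const s a)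

lemma setLIntegral_ofReal_mul_le {α : Type*} [MeasurableSpace α] {μ : Measure α} {s : Set α}
    (hs : MeasurableSet s) {f g : α → ℝ} {B : ℝ} (hf : ∀ y ∈ s, 0 ≤ f y)
    (hg : ∀ y ∈ s, g y ≤ B) :
    ∫⁻ y in s, ENNReal.ofReal (f y * g y) ∂μ
      ≤ ENNReal.ofReal B * ∫⁻ y in s, ENNReal.ofReal (f y) ∂μ := by
  rw [← lintegral_const_mul' _ _ ENNReal.ofReal_ne_top]
  refine setLIntegral_mono' hs fun y hy => ?_
  rw [← ENNReal.ofReal_mul' (hf y hy), mul_comm B]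
  exact ENNReal.ofReal_le_ofReal (mul_le_mul_of_nonneg_left (hg y hy) (hf y hy))

lemma exists_two_pow_mul_le_lt {u R : ℝ} (hR : 0 < R) (h : R ≤ u) :
    ∃ k : ℕ, 2 ^ k * R ≤ u ∧ u < 2 ^ (k + 1) * R := by
  obtain ⟨k, h1, h2⟩ := exists_nat_pow_near ((one_le_div hR).2 h) one_lt_two
  exact ⟨k, (le_div_iff₀ hR).1 h1, (div_lt_iff₀ hR).1 h2⟩

lemma exists_half_pow_mul_lt_le {u R : ℝ} (hu : 0 < u) (h : u ≤ R) :
    ∃ k : ℕ, 2⁻¹ ^ (k + 1) * R < u ∧ u ≤ 2⁻¹ ^ k * R := by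
  have hR := hu.trans_le h
  obtain ⟨k, h1, h2⟩ := exists_nat_pow_near_of_lt_one (div_pos hu hR) ((div_le_one hR).2 h)
    (by norm_num : (0 : ℝ) < 2⁻¹) (by norm_num)
  exact ⟨k, (lt_div_iff₀ hR).1 h1, (div_le_iff₀ hR).1 h2⟩

lemma rpow_pow_mul {b R : ℝ} (hb : 0 ≤ b) (hR : 0 ≤ R) (k : ℕ) (γ : ℝ) :
    (b ^ k * R) ^ γ = (b ^ γ) ^ k * R ^ γ := by
  rw [Real.mul_rpow (pow_nonneg hb k) hR, ← Real.rpow_natCast b k, ← Real.rpow_mul hb,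
    mul_comm (k : ℝ) γ, Real.rpow_mul hb, Real.rpow_natCast]

lemma lintegral_le_of_geometric_shells {α : Type*} [MeasurableSpace α] {μ : Measure α}
    {S : Set α} {T : ℕ → Set α} {f : α → ℝ≥0∞} {C : ℝ≥0∞} {b R γ : ℝ}
    (hb : 0 ≤ b) (hR : 0 ≤ R) (hq : b ^ γ < 1) (hS : S ⊆ ⋃ k, T k)
    (hT : ∀ k : ℕ, ∫⁻ y in T k, f y ∂μ ≤ C * ENNReal.ofReal ((b ^ k * R) ^ γ)) :
    ∫⁻ y in S, f y ∂μ ≤ C * ENNReal.ofReal ((1 - b ^ γ)⁻¹ * R ^ γ) := by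
  have hq0 : 0 ≤ b ^ γ := Real.rpow_nonneg hb γ
  have hgeom : ∑' k : ℕ, ENNReal.ofReal ((b ^ k * R) ^ γ)
      = ENNReal.ofReal ((1 - b ^ γ)⁻¹ * R ^ γ) := by
    simp_rw [rpow_pow_mul hb hR]
    rw [← ENNReal.ofReal_tsum_of_nonneg (fun k => by positivity)
      ((summable_geometric_of_lt_one hq0 hq).mul_right _), tsum_mul_right,
      tsum_geometric_of_lt_one hq0 hq]
  calc ∫⁻ y in S, f y ∂μ ≤ ∫⁻ y in ⋃ k, T k, f y ∂μ := lintegral_mono_set hS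
    _ ≤ ∑' k, ∫⁻ y in T k, f y ∂μ := lintegral_iUnion_le _ _
    _ ≤ ∑' k, C * ENNReal.ofReal ((b ^ k * R) ^ γ) := ENNReal.tsum_le_tsum hT
    _ = C * ENNReal.ofReal ((1 - b ^ γ)⁻¹ * R ^ γ) := by rw [ENNReal.tsum_mul_left, hgeom]

lemma ENNReal.coe_mul_toNNReal (C : ℝ≥0) (c : ℝ) :
    ((C * c.toNNReal : ℝ≥0) : ℝ≥0∞) = C * ENNReal.ofReal c := by
  rw [ENNReal.coe_mul]; rfl

lemma ENNReal.mul_ofReal_mul_ofReal_eq {X : ℝ≥0∞} {a b c d : ℝ} (ha : 0 ≤ a) (hc : 0 ≤ c)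
    (h : a * b = c * d) :
    X * ENNReal.ofReal a * ENNReal.ofReal b = X * ENNReal.ofReal c * ENNReal.ofReal d := by
  rw [mul_assoc, mul_assoc, ← ENNReal.ofReal_mul ha, ← ENNReal.ofReal_mul hc, h]

lemma Real.log_sub_log_le_two_mul_div {D u δ : ℝ} (hD : 0 < D) (hu : D / 2 ≤ u) (hδ : 0 ≤ δ)
    (hDu : D - u ≤ δ) : Real.log D - Real.log u ≤ 2 * δ / D := by
  have hu0 : 0 < u := by linarith
  rw [← Real.log_div hD.ne' hu0.ne']
  calc Real.log (D / u) ≤ D / u - 1 := Real.log_le_sub_one_of_pos (by positivity)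
    _ = (D - u) / u := by field_simp
    _ ≤ 2 * δ / D := by
        rw [div_le_div_iff₀ hu0 hD]
        nlinarith

lemma Real.log_sub_log_le_rpow_div {D u ε : ℝ} (hD : 0 < D) (hu : 0 < u) (hε : 0 < ε) :
    Real.log D - Real.log u ≤ D ^ ε * u ^ (-ε) / ε := by
  rw [← Real.log_div hD.ne' hu.ne', Real.rpow_neg hu.le, ← div_eq_mul_inv,
    ← Real.div_rpow hD.le hu.le]
  exact Real.log_le_rpow_div (by positivity) hε

lemma Real.rpow_neg_le_mul_rpow_neg {a b c p : ℝ} (ha : 0 < a) (hb : 0 ≤ b) (hc : 0 < c)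
    (hp : 0 ≤ p) (h : a ≤ c * b) : b ^ (-p) ≤ c ^ p * a ^ (-p) :=
  calc b ^ (-p) = c ^ p * (c * b) ^ (-p) := by
        rw [Real.mul_rpow hc.le hb, Real.rpow_neg hc.le, ← mul_assoc,
          mul_inv_cancel₀ (Real.rpow_pos_of_pos hc p).ne', one_mul]
    _ ≤ c ^ p * a ^ (-p) := mul_le_mul_of_nonneg_left
        (Real.rpow_le_rpow_of_nonpos ha h (neg_nonpos.2 hp)) (Real.rpow_pos_of_pos hc p).le

lemma LipschitzOnWith.norm_le_add_mul_dist {α F : Type*} [PseudoMetricSpace α]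
    [SeminormedAddCommGroup F] {K : ℝ≥0} {f : α → F} {t : Set α} (hf : LipschitzOnWith K f t)
    {a y : α} (ha : a ∈ t) (hy : y ∈ t) : ‖f y‖ ≤ ‖f a‖ + K * dist y a := by
  have h := norm_sub_norm_le (f y) (f a)
  rw [← dist_eq_norm] at h
  linarith [hf.dist_le_mul y hy a ha]

lemma EuclideanSpace.volume_le_of_slab {ι : Type*} [Fintype ι] [DecidableEq ι] (i₀ : ι)
    (c : EuclideanSpace ℝ ι) {a t : ℝ} (ha : 0 ≤ a) {S : Set (EuclideanSpace ℝ ι)}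
    (hS : ∀ v ∈ S, v i₀ ∈ Ioo 0 t ∧ ∀ i ≠ i₀, |v i - c i| ≤ a) :
    volume S ≤ ENNReal.ofReal ((2 * a) ^ (Fintype.card ι - 1) * t) := by
  set I : ι → Set ℝ := fun i => if i = i₀ then Ioo 0 t else Icc (c i - a) (c i + a)
  have hI : ∀ i, MeasurableSet (I i) := fun i => by
    by_cases h : i = i₀ <;> simp [I, h]
  have hbox : S ⊆ (MeasurableEquiv.toLp 2 (ι → ℝ)).symm ⁻¹' univ.pi I := by
    intro v hv i _
    by_cases h : i = i₀
    · subst h; simpa [I] using (hS v hv).1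
    · simpa [I, h, abs_le, sub_le_iff_le_add, add_comm] using (hS v hv).2 i h
  calc volume S ≤ volume ((MeasurableEquiv.toLp 2 (ι → ℝ)).symm ⁻¹' univ.pi I) := measure_mono hbox
    _ = ∏ i, volume (I i) := by
        rw [(EuclideanSpace.volume_preserving_symm_measurableEquiv_toLp ι).measure_preimage
          (MeasurableSet.univ_pi hI).nullMeasurableSet, volume_pi_pi]
    _ = ENNReal.ofReal ((2 * a) ^ (Fintype.card ι - 1) * t) := by
        rw [← Finset.prod_erase_mul _ _ (Finset.mem_univ i₀),
          Finset.prod_congr rfl (g := fun _ => ENNReal.ofReal (2 * a)) fun i hi => by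
            simp [I, Finset.ne_of_mem_erase hi, Real.volume_Icc, two_mul],
          Finset.prod_const, Finset.card_erase_of_mem (Finset.mem_univ _), Finset.card_univ,
          show volume (I i₀) = ENNReal.ofReal t by simp [I, Real.volume_Ioo],
          ← ENNReal.ofReal_pow (by positivity), ← ENNReal.ofReal_mul (by positivity)]

section FiniteDimensional

variable {E : Type*} [NormedAddCommGroup E] [NormedSpace ℝ E] [FiniteDimensional ℝ E]

lemma ContinuousLinearMap.abs_det_le_opNorm_pow (B : E →L[ℝ] E) :
    |B.det| ≤ ‖B‖ ^ finrank ℝ E := by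
  borelize E
  let μ : Measure E := Measure.addHaar
  have himage : (B : E →ₗ[ℝ] E) '' closedBall 0 1 ⊆ closedBall 0 ‖B‖ := by
    rintro _ ⟨v, hv, rfl⟩
    rw [mem_closedBall_zero_iff] at hv ⊢
    exact (B.le_opNorm v).trans (mul_le_of_le_one_right (norm_nonneg B) hv)
  have hvol := measure_mono (μ := μ) himage
  rw [Measure.addHaar_image_linearMap, Measure.addHaar_closedBall' μ 0 (norm_nonneg B),
    ENNReal.mul_le_mul_iff_left (measure_closedBall_pos μ 0 one_pos).ne'
      measure_closedBall_lt_top.ne, ENNReal.ofReal_le_ofReal_iff (by positivity)] at hvol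
  exact hvol

lemma one_le_pow_mul_abs_det_fderiv {f k : E → E} {A : ℝ} {z : E} (hkf : LeftInverse k f)
    (hf : DifferentiableAt ℝ f z) (hk : DifferentiableAt ℝ k (f z))
    (hA : ‖fderiv ℝ k (f z)‖ ≤ A) :
    1 ≤ A ^ finrank ℝ E * |(fderiv ℝ f z).det| := by
  have hcomp : (fderiv ℝ k (f z)).comp (fderiv ℝ f z) = ContinuousLinearMap.id ℝ E := by
    rw [← fderiv_comp z hk hf, hkf.comp_eq_id, fderiv_id]
  have hdet : (fderiv ℝ k (f z)).det * (fderiv ℝ f z).det = 1 := by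
    rw [← LinearMap.det_comp]
    exact congrArg (fun L : E →L[ℝ] E => LinearMap.det (L : E →ₗ[ℝ] E)) hcomp
      |>.trans LinearMap.det_id
  calc (1 : ℝ) = |(fderiv ℝ k (f z)).det| * |(fderiv ℝ f z).det| := by
        rw [← abs_mul, hdet, abs_one]
    _ ≤ A ^ finrank ℝ E * |(fderiv ℝ f z).det| := by
        gcongr
        exact (ContinuousLinearMap.abs_det_le_opNorm_pow _).trans
          (pow_le_pow_left₀ (norm_nonneg _) hA _)

variable [MeasurableSpace E] [BorelSpace E] (μ : Measure E) [μ.IsAddHaarMeasure]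

lemma lintegral_comp_le_of_one_le_mul_abs_det {S : Set E} (hS : MeasurableSet S) {f : E → E}
    {f' : E → E →L[ℝ] E} (hf' : ∀ z ∈ S, HasFDerivWithinAt f (f' z) S z) (hinj : InjOn f S)
    {c : ℝ} (hdet : ∀ z ∈ S, 1 ≤ c * |(f' z).det|) (G : E → ℝ≥0∞) :
    ∫⁻ z in S, G (f z) ∂μ ≤ ENNReal.ofReal c * ∫⁻ y in f '' S, G y ∂μ := by
  rw [lintegral_image_eq_lintegral_abs_det_fderiv_mul μ hS hf' hinj, ← lintegral_const_mul' _ _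
    ENNReal.ofReal_ne_top]
  refine setLIntegral_mono' hS fun z hz => ?_
  rw [← mul_assoc, ← ENNReal.ofReal_mul' (abs_nonneg _)]
  exact le_mul_of_one_le_left zero_le (ENNReal.one_le_ofReal.2 (hdet z hz))

lemma measure_closedBall_eq_mul_ofReal_rpow (x : E) {ρ : ℝ} (hρ : 0 ≤ ρ) :
    μ (closedBall x ρ)
      = (μ (closedBall 0 1)).toNNReal * ENNReal.ofReal (ρ ^ (finrank ℝ E : ℝ)) := by
  rw [Measure.addHaar_closedBall' μ x hρ, Real.rpow_natCast,
    ENNReal.coe_toNNReal measure_closedBall_lt_top.ne, mul_comm]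

lemma lintegral_closedBall_dist_rpow_le {β : ℝ} (hβd : -(finrank ℝ E : ℝ) < β) (hβ : β < 0) :
    ∃ C : ℝ≥0, ∀ (x : E) (R : ℝ), 0 < R →
      ∫⁻ y in closedBall x R, ENNReal.ofReal (dist y x ^ β) ∂μ
        ≤ C * ENNReal.ofReal (R ^ (β + finrank ℝ E)) := by
  set d : ℝ := (finrank ℝ E : ℝ)
  set v : ℝ≥0 := (μ (closedBall 0 1)).toNNReal
  have hq : (2⁻¹ : ℝ) ^ (β + d) < 1 := Real.rpow_lt_one (by norm_num) (by norm_num) (by linarith)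
  refine ⟨v * (2⁻¹ ^ β : ℝ).toNNReal * ((1 - 2⁻¹ ^ (β + d))⁻¹ : ℝ).toNNReal, fun x R hR => ?_⟩
  have hdist : Measurable fun y : E => dist y x := measurable_id.dist measurable_const
  set T : ℕ → Set E := fun k => {y | 2⁻¹ ^ (k + 1) * R < dist y x ∧ dist y x ≤ 2⁻¹ ^ k * R}
  have hcover : closedBall x R ⊆ {x} ∪ ⋃ k, T k := by
    intro y hy
    rcases eq_or_ne y x with rfl | hne
    · exact Or.inl rfl
    · exact Or.inr (mem_iUnion.2 (exists_half_pow_mul_lt_le (dist_pos.2 hne) hy))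
  have hshell : ∀ k : ℕ, ∫⁻ y in T k, ENNReal.ofReal (dist y x ^ β) ∂μ
      ≤ (v * ENNReal.ofReal (2⁻¹ ^ β)) * ENNReal.ofReal ((2⁻¹ ^ k * R) ^ (β + d)) := by
    intro k
    set ρ : ℝ := 2⁻¹ ^ k * R
    have hρ : 0 < ρ := by positivity
    have hinner : ∀ y ∈ T k, ENNReal.ofReal (dist y x ^ β) ≤ ENNReal.ofReal ((2⁻¹ * ρ) ^ β) :=
      fun y hy => ENNReal.ofReal_le_ofReal <| Real.rpow_le_rpow_of_nonpos (by positivity)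
        (by rw [← mul_assoc, ← pow_succ']; exact hy.1.le) hβ.le
    calc ∫⁻ y in T k, ENNReal.ofReal (dist y x ^ β) ∂μ
        ≤ ENNReal.ofReal ((2⁻¹ * ρ) ^ β) * μ (closedBall x ρ) :=
          (setLIntegral_le_mul_measure ((measurableSet_lt measurable_const hdist).inter
            (measurableSet_le hdist measurable_const)) hinner).trans
            (by gcongr; exact fun y hy => hy.2)
      _ = (v * ENNReal.ofReal (2⁻¹ ^ β)) * ENNReal.ofReal (ρ ^ (β + d)) := by
          rw [measure_closedBall_eq_mul_ofReal_rpow μ x hρ.le, Real.rpow_add hρ,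
            Real.mul_rpow (by norm_num) hρ.le, ENNReal.ofReal_mul (by positivity),
            ENNReal.ofReal_mul (by positivity)]
          ring
  have hcenter : ∫⁻ y in {x}, ENNReal.ofReal (dist y x ^ β) ∂μ = 0 := by
    simp [Real.zero_rpow hβ.ne]
  calc ∫⁻ y in closedBall x R, ENNReal.ofReal (dist y x ^ β) ∂μ
      ≤ ∫⁻ y in {x} ∪ ⋃ k, T k, ENNReal.ofReal (dist y x ^ β) ∂μ := lintegral_mono_set hcover
    _ ≤ ∫⁻ y in ⋃ k, T k, ENNReal.ofReal (dist y x ^ β) ∂μ := by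
        refine (lintegral_union_le _ _ _).trans ?_
        rw [hcenter, zero_add]
    _ ≤ (v * ENNReal.ofReal (2⁻¹ ^ β)) * ENNReal.ofReal ((1 - 2⁻¹ ^ (β + d))⁻¹ * R ^ (β + d)) :=
        lintegral_le_of_geometric_shells (by norm_num) hR.le hq subset_rfl hshell
    _ = _ := by
        rw [ENNReal.ofReal_mul (inv_nonneg.2 (sub_nonneg.2 hq.le))]
        simp only [ENNReal.coe_mul, ENNReal.ofReal]
        ring

lemma lintegral_compl_ball_dist_rpow_le {β : ℝ} (hβd : β < -(finrank ℝ E : ℝ)) :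
    ∃ C : ℝ≥0, ∀ (x : E) (R : ℝ), 0 < R →
      ∫⁻ y in (ball x R)ᶜ, ENNReal.ofReal (dist y x ^ β) ∂μ
        ≤ C * ENNReal.ofReal (R ^ (β + finrank ℝ E)) := by
  set d : ℝ := (finrank ℝ E : ℝ)
  set v : ℝ≥0 := (μ (closedBall 0 1)).toNNReal
  have hd : 0 ≤ d := Nat.cast_nonneg _
  have hq : (2 : ℝ) ^ (β + d) < 1 := Real.rpow_lt_one_of_one_lt_of_neg (by norm_num) (by linarith)
  refine ⟨v * (2 ^ d : ℝ).toNNReal * ((1 - 2 ^ (β + d))⁻¹ : ℝ).toNNReal, fun x R hR => ?_⟩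
  have hdist : Measurable fun y : E => dist y x := measurable_id.dist measurable_const
  set T : ℕ → Set E := fun k => {y | 2 ^ k * R ≤ dist y x ∧ dist y x < 2 ^ (k + 1) * R}
  have hshell : ∀ k : ℕ, ∫⁻ y in T k, ENNReal.ofReal (dist y x ^ β) ∂μ
      ≤ (v * ENNReal.ofReal (2 ^ d)) * ENNReal.ofReal ((2 ^ k * R) ^ (β + d)) := by
    intro k
    set ρ : ℝ := 2 ^ k * R
    have hρ : 0 < ρ := by positivity
    have hinner : ∀ y ∈ T k, ENNReal.ofReal (dist y x ^ β) ≤ ENNReal.ofReal (ρ ^ β) :=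
      fun y hy => ENNReal.ofReal_le_ofReal <| Real.rpow_le_rpow_of_nonpos hρ hy.1 (by linarith)
    have hsub : T k ⊆ closedBall x (2 * ρ) := fun y hy =>
      mem_closedBall.2 (hy.2.le.trans_eq (by ring))
    calc ∫⁻ y in T k, ENNReal.ofReal (dist y x ^ β) ∂μ
        ≤ ENNReal.ofReal (ρ ^ β) * μ (closedBall x (2 * ρ)) :=
          (setLIntegral_le_mul_measure ((measurableSet_le measurable_const hdist).inter
            (measurableSet_lt hdist measurable_const)) hinner).trans
            (by gcongr; exact hsub)
      _ = (v * ENNReal.ofReal (2 ^ d)) * ENNReal.ofReal (ρ ^ (β + d)) := by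
          rw [measure_closedBall_eq_mul_ofReal_rpow μ x (by positivity), Real.rpow_add hρ,
            Real.mul_rpow (by norm_num) hρ.le, ENNReal.ofReal_mul (by positivity),
            ENNReal.ofReal_mul (by positivity)]
          ring
  calc ∫⁻ y in (ball x R)ᶜ, ENNReal.ofReal (dist y x ^ β) ∂μ
      ≤ (v * ENNReal.ofReal (2 ^ d)) * ENNReal.ofReal ((1 - 2 ^ (β + d))⁻¹ * R ^ (β + d)) :=
        lintegral_le_of_geometric_shells (by norm_num) hR.le hq
          (fun y hy => mem_iUnion.2 (exists_two_pow_mul_le_lt hR (not_lt.1 hy))) hshell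
    _ = _ := by
        rw [ENNReal.ofReal_mul (inv_nonneg.2 (sub_nonneg.2 hq.le))]
        simp only [ENNReal.coe_mul, ENNReal.ofReal]
        ring

end FiniteDimensional

namespace Censored

variable {N : ℕ}

lemma sdist_eq_infDist_compl {Ω : Set (Euc N)} {y : Euc N} (hy : y ∈ closure Ω) :
    sdist Ω y = infDist y Ωᶜ := by
  rw [sdist, ← infDist_closure (s := Ω), infDist_zero_of_mem hy, sub_zero]

lemma sdist_nonneg {Ω : Set (Euc N)} {y : Euc N} (hy : y ∈ closure Ω) : 0 ≤ sdist Ω y :=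
  (sdist_eq_infDist_compl hy).symm ▸ infDist_nonneg

lemma sdist_le_sdist_add_dist {Ω : Set (Euc N)} {x y : Euc N} (hx : x ∈ closure Ω)
    (hy : y ∈ closure Ω) : sdist Ω x ≤ sdist Ω y + dist x y := by
  rw [sdist_eq_infDist_compl hx, sdist_eq_infDist_compl hy]
  exact infDist_le_infDist_add_dist

lemma sdist_pos {Ω : Set (Euc N)} (hΩ : IsOpen Ω) (hne : Ωᶜ.Nonempty) {x : Euc N} (hx : x ∈ Ω) :
    0 < sdist Ω x := by
  rw [sdist_eq_infDist_compl (subset_closure hx)]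
  exact (hΩ.isClosed_compl.notMem_iff_infDist_pos hne).mp fun h => h hx

lemma sdist_le_dist_of_mem_frontier {Ω : Set (Euc N)} {x x₀ : Euc N} (hx : x ∈ closure Ω)
    (hx₀ : x₀ ∈ frontier Ω) : sdist Ω x ≤ dist x x₀ := by
  rw [sdist_eq_infDist_compl hx, ← infDist_closure]
  exact infDist_le_dist_of_mem (frontier_subset_closure (frontier_compl Ω ▸ hx₀))

lemma continuous_sdist {Ω : Set (Euc N)} : Continuous (sdist Ω) :=
  (continuous_infDist_pt _).sub (continuous_infDist_pt _)

def logKernel (Ω : Set (Euc N)) (σ : ℝ) (x y : Euc N) : ℝ :=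
  max (Real.log (sdist Ω x) - Real.log (sdist Ω y)) 0 * dist y x ^ (-((N : ℝ) + σ))

lemma logKernel_nonneg (Ω : Set (Euc N)) (σ : ℝ) (x y : Euc N) : 0 ≤ logKernel Ω σ x y :=
  mul_nonneg (le_max_right _ _) (Real.rpow_nonneg dist_nonneg _)

lemma exists_lintegral_logKernel_near_le (hN : 0 < N) {σ : ℝ} (hσ0 : 0 < σ) (hσ1 : σ < 1)
    (Ω : Set (Euc N)) :
    ∃ C : ℝ≥0, ∀ x ∈ closure Ω, 0 < sdist Ω x →
      ∫⁻ y in closure Ω ∩ {y | sdist Ω x / 2 ≤ sdist Ω y} ∩ closedBall x (sdist Ω x),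
        ENNReal.ofReal (logKernel Ω σ x y) ≤ C * ENNReal.ofReal (sdist Ω x ^ (-σ)) := by
  have hN1 : (1 : ℝ) ≤ N := by exact_mod_cast hN
  obtain ⟨C, hC⟩ := lintegral_closedBall_dist_rpow_le (volume : Measure (Euc N))
    (β := 1 - (N + σ)) (by simp; linarith) (by linarith)
  refine ⟨2 * C, fun x hx hD => ?_⟩
  set D := sdist Ω x
  set P := closure Ω ∩ {y | D / 2 ≤ sdist Ω y} ∩ closedBall x D
  have hPm : MeasurableSet P := (measurableSet_closure.inter
    (continuous_sdist.measurable measurableSet_Ici)).inter measurableSet_closedBall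
  have hpt : ∀ y ∈ P, ENNReal.ofReal (logKernel Ω σ x y)
      ≤ ENNReal.ofReal (2 / D) * ENNReal.ofReal (dist y x ^ (1 - (N + σ))) := by
    intro y hy
    rw [← ENNReal.ofReal_mul (by positivity)]
    refine ENNReal.ofReal_le_ofReal ?_
    have hlog : max (Real.log D - Real.log (sdist Ω y)) 0 ≤ 2 * dist y x / D :=
      max_le (Real.log_sub_log_le_two_mul_div hD hy.1.2 dist_nonneg
        (by linarith [sdist_le_sdist_add_dist hx hy.1.1, dist_comm x y])) (by positivity)
    calc logKernel Ω σ x y ≤ 2 * dist y x / D * dist y x ^ (-((N : ℝ) + σ)) :=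
          mul_le_mul_of_nonneg_right hlog (Real.rpow_nonneg dist_nonneg _)
      _ = 2 / D * dist y x ^ (1 - (N + σ)) := by
          rw [sub_eq_add_neg, Real.rpow_add' dist_nonneg (by linarith), Real.rpow_one]
          ring
  calc ∫⁻ y in P, ENNReal.ofReal (logKernel Ω σ x y)
      ≤ ∫⁻ y in P, ENNReal.ofReal (2 / D) * ENNReal.ofReal (dist y x ^ (1 - (N + σ))) :=
        setLIntegral_mono' hPm hpt
    _ ≤ ENNReal.ofReal (2 / D) *
          ∫⁻ y in closedBall x D, ENNReal.ofReal (dist y x ^ (1 - (N + σ))) := by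
        rw [lintegral_const_mul' _ _ ENNReal.ofReal_ne_top]
        gcongr
        exact fun y hy => hy.2
    _ ≤ ENNReal.ofReal (2 / D) * (C * ENNReal.ofReal (D ^ (1 - (N + σ) + N))) := by
        gcongr
        simpa using hC x D hD
    _ = ↑(2 * C) * ENNReal.ofReal (D ^ (-σ)) := by
        rw [mul_left_comm, ← ENNReal.ofReal_mul (by positivity), ENNReal.coe_mul,
          show 1 - (N + σ) + N = 1 + -σ by ring, Real.rpow_add hD, Real.rpow_one,
          ← mul_assoc, div_mul_cancel₀ _ hD.ne', ENNReal.ofReal_mul zero_le_two]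
        simp only [ENNReal.ofReal_ofNat, ENNReal.coe_ofNat]
        ring

lemma exists_lintegral_logKernel_far_le {σ : ℝ} (hσ0 : 0 < σ) (Ω : Set (Euc N)) (r : ℝ) :
    ∃ C : ℝ≥0, ∀ x : Euc N, 0 < sdist Ω x → sdist Ω x ≤ r →
      ∫⁻ y in {y | sdist Ω x / 2 ≤ sdist Ω y ∨ sdist Ω y = 0} ∩ {y | sdist Ω x ≤ dist y x},
        ENNReal.ofReal (logKernel Ω σ x y) ≤ C * ENNReal.ofReal (sdist Ω x ^ (-σ)) := by
  obtain ⟨C, hC⟩ := lintegral_compl_ball_dist_rpow_le (volume : Measure (Euc N))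
    (β := -(N + σ)) (by simp; linarith)
  set L : ℝ := 1 + max (Real.log r) 0
  refine ⟨L.toNNReal * C, fun x hD hDr => ?_⟩
  set D := sdist Ω x
  set P := {y | D / 2 ≤ sdist Ω y ∨ sdist Ω y = 0} ∩ {y | D ≤ dist y x}
  have hPm : MeasurableSet P := ((continuous_sdist.measurable measurableSet_Ici).union
      (continuous_sdist.measurable (measurableSet_singleton 0))).inter
    (measurableSet_le measurable_const (measurable_id.dist measurable_const))
  have hlog : ∀ y ∈ P, max (Real.log D - Real.log (sdist Ω y)) 0 ≤ L := by
    rintro y ⟨hy | hy, -⟩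
    · have h2 : Real.log 2 < 1 := Real.log_two_lt_d9.trans (by norm_num)
      have := Real.log_le_log (by positivity) hy
      rw [Real.log_div hD.ne' two_ne_zero] at this
      exact max_le (by linarith [le_max_right (Real.log r) 0]) (by positivity)
    · -- on the boundary the kernel sees the junk value `Real.log 0 = 0`
      rw [hy, Real.log_zero, sub_zero]
      exact max_le (by linarith [Real.log_le_log hD hDr, le_max_left (Real.log r) 0])
        (by positivity)
  have hpt : ∀ y ∈ P, ENNReal.ofReal (logKernel Ω σ x y)
      ≤ ENNReal.ofReal L * ENNReal.ofReal (dist y x ^ (-((N : ℝ) + σ))) := fun y hy => by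
    rw [← ENNReal.ofReal_mul (by positivity)]
    exact ENNReal.ofReal_le_ofReal
      (mul_le_mul_of_nonneg_right (hlog y hy) (Real.rpow_nonneg dist_nonneg _))
  calc ∫⁻ y in P, ENNReal.ofReal (logKernel Ω σ x y)
      ≤ ∫⁻ y in P, ENNReal.ofReal L * ENNReal.ofReal (dist y x ^ (-((N : ℝ) + σ))) :=
        setLIntegral_mono' hPm hpt
    _ ≤ ENNReal.ofReal L *
          ∫⁻ y in (ball x D)ᶜ, ENNReal.ofReal (dist y x ^ (-((N : ℝ) + σ))) := by
        rw [lintegral_const_mul' _ _ ENNReal.ofReal_ne_top]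
        gcongr
        exact fun y hy => mem_compl (not_lt.2 (show D ≤ dist y x from hy.2))
    _ ≤ ENNReal.ofReal L * (C * ENNReal.ofReal (D ^ (-((N : ℝ) + σ) + N))) := by
        gcongr
        simpa using hC x D hD
    _ = ↑(L.toNNReal * C) * ENNReal.ofReal (D ^ (-σ)) := by
        rw [show -((N : ℝ) + σ) + N = -σ by ring, ENNReal.coe_mul, ← mul_assoc]
        rfl

namespace IsW2Chart

variable {hN : 0 < N} {Ω : Set (Euc N)} {s : Euc N} {r : ℝ} {ψ ψinv : Euc N → Euc N}

lemma injOn (h : IsW2Chart hN Ω s r ψ ψinv) : InjOn ψ (ball s r) := fun a ha b hb hab => by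
  rw [← h.2.2.2.2.2.1 a ha, hab, h.2.2.2.2.2.1 b hb]

lemma differentiableAt (h : IsW2Chart hN Ω s r ψ ψinv) {y : Euc N} (hy : y ∈ ball s r) :
    DifferentiableAt ℝ ψ y :=
  (h.2.1.contDiffAt (isOpen_ball.mem_nhds hy)).differentiableAt one_ne_zero

lemma exists_lipschitzOnWith (h : IsW2Chart hN Ω s r ψ ψinv) :
    ∃ K : ℝ≥0, LipschitzOnWith K ψ (ball s r) := by
  obtain ⟨L, hL⟩ := h.2.2.1
  have hr := h.1
  refine ⟨‖fderiv ℝ ψ s‖₊ + L * r.toNNReal, (convex_ball s r).lipschitzOnWith_of_nnnorm_fderiv_le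
    (fun y hy => h.differentiableAt hy) fun y hy => ?_⟩
  rw [← NNReal.coe_le_coe]
  push_cast
  rw [Real.coe_toNNReal _ hr.le]
  refine (hL.norm_le_add_mul_dist (mem_ball_self hr) hy).trans ?_
  gcongr
  exact (mem_ball.1 hy).le

lemma fderivWithin_comp_fderiv (h : IsW2Chart hN Ω s r ψ ψinv) {y : Euc N} (hy : y ∈ ball s r) :
    (fderivWithin ℝ ψinv (ψ '' ball s r) (ψ y)).comp (fderiv ℝ ψ y)
      = ContinuousLinearMap.id ℝ (Euc N) := by
  have hinv : HasFDerivWithinAt (ψinv ∘ ψ)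
      ((fderivWithin ℝ ψinv (ψ '' ball s r) (ψ y)).comp (fderiv ℝ ψ y)) (ball s r) y :=
    (((h.2.2.2.1.differentiableOn one_ne_zero) (ψ y) (mem_image_of_mem ψ hy)).hasFDerivWithinAt
      ).comp y (h.differentiableAt hy).hasFDerivAt.hasFDerivWithinAt (mapsTo_image ψ _)
  have hid : HasFDerivWithinAt (ψinv ∘ ψ) (ContinuousLinearMap.id ℝ (Euc N)) (ball s r) y :=
    (hasFDerivWithinAt_id y _).congr (fun z hz => h.2.2.2.2.2.1 z hz) (h.2.2.2.2.2.1 y hy)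
  exact (isOpen_ball.uniqueDiffWithinAt hy).eq hinv hid

lemma isOpen_image (h : IsW2Chart hN Ω s r ψ ψinv) : IsOpen (ψ '' ball s r) := by
  rw [isOpen_iff_mem_nhds]
  rintro _ ⟨y, hy, rfl⟩
  have hinj : Injective (fderiv ℝ ψ y) :=
    LeftInverse.injective (g := fderivWithin ℝ ψinv (ψ '' ball s r) (ψ y)) fun v =>
      congrArg (fun L : Euc N →L[ℝ] Euc N => L v) (h.fderivWithin_comp_fderiv hy)
  let e : Euc N ≃L[ℝ] Euc N :=
    ((fderiv ℝ ψ y : Euc N →ₗ[ℝ] Euc N).linearEquivOfInjective hinj rfl).toContinuousLinearEquiv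
  have hstrict : HasStrictFDerivAt ψ (e : Euc N →L[ℝ] Euc N) y :=
    (h.2.1.contDiffAt (isOpen_ball.mem_nhds hy)).hasStrictFDerivAt one_ne_zero
  rw [← hstrict.map_nhds_eq_of_equiv]
  exact image_mem_map (isOpen_ball.mem_nhds hy)

lemma exists_norm_fderiv_inv_le (h : IsW2Chart hN Ω s r ψ ψinv) :
    ∃ M : ℝ, ∀ w ∈ ψ '' ball s r, ‖fderiv ℝ ψinv w‖ ≤ M := by
  obtain ⟨K, hK⟩ := h.exists_lipschitzOnWith
  obtain ⟨L, hL⟩ := h.2.2.2.2.1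
  have hr := h.1
  have hs : ψ s ∈ ψ '' ball s r := mem_image_of_mem ψ (mem_ball_self hr)
  refine ⟨‖fderiv ℝ ψinv (ψ s)‖ + L * (K * r), ?_⟩
  rintro _ ⟨y, hy, rfl⟩
  refine (hL.norm_le_add_mul_dist hs (mem_image_of_mem ψ hy)).trans ?_
  gcongr
  exact (hK.dist_le_mul y hy s (mem_ball_self hr)).trans (by gcongr; exact (mem_ball.1 hy).le)

lemma exists_volume_le_mul_volume_image (h : IsW2Chart hN Ω s r ψ ψinv) :
    ∃ C : ℝ≥0, ∀ E ⊆ ball s r, MeasurableSet E → volume E ≤ C * volume (ψ '' E) := by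
  obtain ⟨M, hM⟩ := h.exists_norm_fderiv_inv_le
  refine ⟨(M ^ N).toNNReal, fun E hE hEm => ?_⟩
  have hTm : MeasurableSet (ψ '' E) := hEm.image_of_continuousOn_injOn
    (h.2.1.continuousOn.mono hE) (h.injOn.mono hE)
  have hT : ψ '' E ⊆ ψ '' ball s r := image_mono hE
  have hdiff : ∀ w ∈ ψ '' E, DifferentiableAt ℝ ψinv w := fun w hw =>
    (h.2.2.2.1.contDiffAt (h.isOpen_image.mem_nhds (hT hw))).differentiableAt one_ne_zero
  have hback : ψinv '' (ψ '' E) = E := by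
    rw [image_image]
    exact (image_congr fun y hy => h.2.2.2.2.2.1 y (hE hy)).trans (image_id' E)
  calc volume E = volume (ψinv '' (ψ '' E)) := by rw [hback]
    _ ≤ ∫⁻ w in ψ '' E, ENNReal.ofReal |(fderiv ℝ ψinv w).det| :=
        addHaar_image_le_lintegral_abs_det_fderiv volume hTm
          fun w hw => (hdiff w hw).hasFDerivAt.hasFDerivWithinAt
    _ ≤ (M ^ N).toNNReal * volume (ψ '' E) := by
        refine setLIntegral_le_mul_measure hTm fun w hw => ENNReal.ofReal_le_ofReal ?_
        have hdet := (fderiv ℝ ψinv w).abs_det_le_opNorm_pow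
        rw [finrank_euclideanSpace_fin] at hdet
        exact hdet.trans (pow_le_pow_left₀ (norm_nonneg _) (hM w (hT hw)) N)

/-- The chart maps the layer into a box: height `t` in the last coordinate, which is `sdist Ω`,
and side `O(ρ)` in the others. -/
lemma exists_volume_layer_le (h : IsW2Chart hN Ω s r ψ ψinv) :
    ∃ C : ℝ≥0, ∀ x ∈ ball s r, ∀ ρ t : ℝ, 0 ≤ ρ →
      volume (ball s r ∩ closedBall x ρ ∩ sdist Ω ⁻¹' Ioo 0 t)
        ≤ C * ENNReal.ofReal (ρ ^ (N - 1) * t) := by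
  obtain ⟨K, hK⟩ := h.exists_lipschitzOnWith
  obtain ⟨C, hC⟩ := h.exists_volume_le_mul_volume_image
  refine ⟨C * ((2 * K) ^ (N - 1) : ℝ).toNNReal, fun x hx ρ t hρ => ?_⟩
  set E := ball s r ∩ closedBall x ρ ∩ sdist Ω ⁻¹' Ioo 0 t
  have hE : E ⊆ ball s r := fun y hy => hy.1.1
  have hEm : MeasurableSet E := (measurableSet_ball.inter measurableSet_closedBall).inter
    (continuous_sdist.measurable measurableSet_Ioo)
  have hslab : ∀ v ∈ ψ '' E, v ⟨N - 1, Nat.sub_lt hN Nat.one_pos⟩ ∈ Ioo 0 t ∧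
      ∀ i ≠ ⟨N - 1, Nat.sub_lt hN Nat.one_pos⟩, |v i - ψ x i| ≤ K * ρ := by
    rintro _ ⟨y, hy, rfl⟩
    refine ⟨(h.2.2.2.2.2.2 y (hE hy)).symm ▸ hy.2, fun i _ => ?_⟩
    calc |ψ y i - ψ x i| = dist (ψ y i) (ψ x i) := (Real.dist_eq _ _).symm
      _ ≤ dist (ψ y) (ψ x) := PiLp.dist_apply_le _ _ i
      _ ≤ K * dist y x := hK.dist_le_mul y (hE hy) x hx
      _ ≤ K * ρ := by gcongr; exact hy.1.2
  calc volume E ≤ C * volume (ψ '' E) := hC E hE hEm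
    _ ≤ C * ENNReal.ofReal ((2 * (K * ρ)) ^ (Fintype.card (Fin N) - 1) * t) := by
        gcongr
        exact EuclideanSpace.volume_le_of_slab _ (ψ x) (by positivity) hslab
    _ = ↑(C * ((2 * K) ^ (N - 1) : ℝ).toNNReal) * ENNReal.ofReal (ρ ^ (N - 1) * t) := by
        rw [Fintype.card_fin, ENNReal.coe_mul_toNNReal, mul_assoc,
          ← ENNReal.ofReal_mul (by positivity), mul_pow, mul_pow]
        ring_nf

lemma exists_lintegral_layer_sdist_rpow_le (h : IsW2Chart hN Ω s r ψ ψinv) {ε : ℝ}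
    (hε0 : 0 ≤ ε) (hε1 : ε < 1) :
    ∃ C : ℝ≥0, ∀ x ∈ ball s r, ∀ ρ t : ℝ, 0 ≤ ρ → 0 < t →
      ∫⁻ y in ball s r ∩ closedBall x ρ ∩ sdist Ω ⁻¹' Ioo 0 t, ENNReal.ofReal (sdist Ω y ^ (-ε))
        ≤ C * ENNReal.ofReal (ρ ^ (N - 1) * t ^ (1 - ε)) := by
  obtain ⟨C, hC⟩ := h.exists_volume_layer_le
  have hq : (2⁻¹ : ℝ) ^ (1 - ε) < 1 := Real.rpow_lt_one (by norm_num) (by norm_num) (by linarith)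
  have hq' : 0 ≤ (1 - (2⁻¹ : ℝ) ^ (1 - ε))⁻¹ := inv_nonneg.2 (sub_nonneg.2 hq.le)
  refine ⟨C * (2 * 2⁻¹ ^ (-ε) * (1 - 2⁻¹ ^ (1 - ε))⁻¹ : ℝ).toNNReal,
    fun x hx ρ t hρ ht => ?_⟩
  set T : ℕ → Set (Euc N) := fun m =>
    ball s r ∩ closedBall x ρ ∩ sdist Ω ⁻¹' Ioc (2⁻¹ ^ (m + 1) * t) (2⁻¹ ^ m * t)
  have hcover : ball s r ∩ closedBall x ρ ∩ sdist Ω ⁻¹' Ioo 0 t ⊆ ⋃ m, T m := fun y hy =>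
    mem_iUnion.2 ((exists_half_pow_mul_lt_le hy.2.1 hy.2.2.le).imp fun _ hm => ⟨hy.1, hm⟩)
  have hshell : ∀ m : ℕ, ∫⁻ y in T m, ENNReal.ofReal (sdist Ω y ^ (-ε))
      ≤ (C * ENNReal.ofReal (2 * 2⁻¹ ^ (-ε) * ρ ^ (N - 1)))
        * ENNReal.ofReal ((2⁻¹ ^ m * t) ^ (1 - ε)) := by
    intro m
    set τ : ℝ := 2⁻¹ ^ m * t
    have hτ : 0 < τ := by positivity
    have hTm : MeasurableSet (T m) := (measurableSet_ball.inter measurableSet_closedBall).inter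
      (continuous_sdist.measurable measurableSet_Ioc)
    have hinner : ∀ y ∈ T m, ENNReal.ofReal (sdist Ω y ^ (-ε))
        ≤ ENNReal.ofReal ((2⁻¹ * τ) ^ (-ε)) := fun y hy =>
      ENNReal.ofReal_le_ofReal <| Real.rpow_le_rpow_of_nonpos (by positivity)
        (by rw [← mul_assoc, ← pow_succ']; exact hy.2.1.le) (by linarith)
    have hsub : T m ⊆ ball s r ∩ closedBall x ρ ∩ sdist Ω ⁻¹' Ioo 0 (2 * τ) := fun y hy =>
      ⟨hy.1, (by positivity : (0 : ℝ) < 2⁻¹ ^ (m + 1) * t).trans hy.2.1,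
        hy.2.2.trans_lt (lt_two_mul_self hτ)⟩
    calc ∫⁻ y in T m, ENNReal.ofReal (sdist Ω y ^ (-ε))
        ≤ ENNReal.ofReal ((2⁻¹ * τ) ^ (-ε)) * volume (T m) :=
          setLIntegral_le_mul_measure hTm hinner
      _ ≤ ENNReal.ofReal ((2⁻¹ * τ) ^ (-ε)) * (C * ENNReal.ofReal (ρ ^ (N - 1) * (2 * τ))) := by
          gcongr
          exact (measure_mono hsub).trans (hC x hx ρ _ hρ)
      _ = (C * ENNReal.ofReal (2 * 2⁻¹ ^ (-ε) * ρ ^ (N - 1))) * ENNReal.ofReal (τ ^ (1 - ε)) := by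
          rw [mul_left_comm, mul_assoc, mul_assoc, ← ENNReal.ofReal_mul (by positivity),
            ← ENNReal.ofReal_mul (by positivity), sub_eq_add_neg, Real.rpow_add hτ,
            Real.rpow_one, Real.mul_rpow (by norm_num) hτ.le]
          ring_nf
  calc ∫⁻ y in ball s r ∩ closedBall x ρ ∩ sdist Ω ⁻¹' Ioo 0 t, ENNReal.ofReal (sdist Ω y ^ (-ε))
      ≤ (C * ENNReal.ofReal (2 * 2⁻¹ ^ (-ε) * ρ ^ (N - 1)))
        * ENNReal.ofReal ((1 - 2⁻¹ ^ (1 - ε))⁻¹ * t ^ (1 - ε)) :=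
        lintegral_le_of_geometric_shells (by norm_num) ht.le hq hcover hshell
    _ = _ := by
        rw [ENNReal.coe_mul_toNNReal]
        exact ENNReal.mul_ofReal_mul_ofReal_eq (by positivity) (mul_nonneg (by positivity) hq')
          (by ring)

lemma exists_lintegral_layer_sdist_rpow_mul_dist_rpow_le (h : IsW2Chart hN Ω s r ψ ψinv)
    {ε σ : ℝ} (hε0 : 0 ≤ ε) (hε1 : ε < 1) (hσ0 : 0 < σ) :
    ∃ C : ℝ≥0, ∀ x ∈ ball s r, ∀ t : ℝ, 0 < t →
      ∫⁻ y in ball s r ∩ sdist Ω ⁻¹' Ioo 0 t ∩ {y | t ≤ dist y x},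
        ENNReal.ofReal (sdist Ω y ^ (-ε) * dist y x ^ (-((N : ℝ) + σ)))
        ≤ C * ENNReal.ofReal (t ^ (-ε - σ)) := by
  obtain ⟨CE, hCE⟩ := h.exists_lintegral_layer_sdist_rpow_le hε0 hε1
  have hq : (2 : ℝ) ^ (-1 - σ) < 1 := Real.rpow_lt_one_of_one_lt_of_neg (by norm_num) (by linarith)
  have hq' : 0 ≤ (1 - (2 : ℝ) ^ (-1 - σ))⁻¹ := inv_nonneg.2 (sub_nonneg.2 hq.le)
  refine ⟨CE * (2 ^ (N - 1) * (1 - 2 ^ (-1 - σ))⁻¹ : ℝ).toNNReal, fun x hx t ht => ?_⟩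
  set P := ball s r ∩ sdist Ω ⁻¹' Ioo 0 t ∩ {y | t ≤ dist y x}
  have hdist : Measurable fun y : Euc N => dist y x := measurable_id.dist measurable_const
  have hPm : MeasurableSet P := (measurableSet_ball.inter
    (continuous_sdist.measurable measurableSet_Ioo)).inter (measurableSet_le measurable_const hdist)
  set T : ℕ → Set (Euc N) := fun k => P ∩ {y | 2 ^ k * t ≤ dist y x ∧ dist y x < 2 ^ (k + 1) * t}
  have hcover : P ⊆ ⋃ k, T k := fun y hy =>
    mem_iUnion.2 ((exists_two_pow_mul_le_lt ht hy.2).imp fun _ hk => ⟨hy, hk⟩)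
  have hshell : ∀ k : ℕ,
      ∫⁻ y in T k, ENNReal.ofReal (sdist Ω y ^ (-ε) * dist y x ^ (-((N : ℝ) + σ)))
        ≤ (CE * ENNReal.ofReal (2 ^ (N - 1) * t ^ (1 - ε)))
          * ENNReal.ofReal ((2 ^ k * t) ^ (-1 - σ)) := by
    intro k
    set ρ : ℝ := 2 ^ k * t
    have hρ : 0 < ρ := by positivity
    have hTm : MeasurableSet (T k) := hPm.inter
      ((measurableSet_le measurable_const hdist).inter (measurableSet_lt hdist measurable_const))
    have hsub : T k ⊆ ball s r ∩ closedBall x (2 * ρ) ∩ sdist Ω ⁻¹' Ioo 0 t := fun y hy =>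
      ⟨⟨hy.1.1.1, mem_closedBall.2 (hy.2.2.le.trans_eq (by ring))⟩, hy.1.1.2⟩
    have hpow : ρ ^ (-((N : ℝ) + σ)) * ρ ^ (N - 1) = ρ ^ (-1 - σ) := by
      rw [← Real.rpow_natCast, Nat.cast_sub hN, ← Real.rpow_add hρ]
      congr 1
      push_cast
      ring
    calc ∫⁻ y in T k, ENNReal.ofReal (sdist Ω y ^ (-ε) * dist y x ^ (-((N : ℝ) + σ)))
        ≤ ENNReal.ofReal (ρ ^ (-((N : ℝ) + σ))) *
            ∫⁻ y in T k, ENNReal.ofReal (sdist Ω y ^ (-ε)) :=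
          setLIntegral_ofReal_mul_le hTm (fun y hy => Real.rpow_nonneg hy.1.1.2.1.le _)
            fun y hy => Real.rpow_le_rpow_of_nonpos hρ hy.2.1 (by linarith)
      _ ≤ ENNReal.ofReal (ρ ^ (-((N : ℝ) + σ))) *
            (CE * ENNReal.ofReal ((2 * ρ) ^ (N - 1) * t ^ (1 - ε))) := by
          gcongr
          exact (lintegral_mono_set hsub).trans (hCE x hx _ t (by positivity) ht)
      _ = (CE * ENNReal.ofReal (2 ^ (N - 1) * t ^ (1 - ε))) * ENNReal.ofReal (ρ ^ (-1 - σ)) := by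
          rw [mul_left_comm, ← mul_assoc]
          refine ENNReal.mul_ofReal_mul_ofReal_eq (by positivity) (by positivity) ?_
          rw [mul_pow, ← hpow]
          ring
  calc ∫⁻ y in P, ENNReal.ofReal (sdist Ω y ^ (-ε) * dist y x ^ (-((N : ℝ) + σ)))
      ≤ (CE * ENNReal.ofReal (2 ^ (N - 1) * t ^ (1 - ε)))
          * ENNReal.ofReal ((1 - 2 ^ (-1 - σ))⁻¹ * t ^ (-1 - σ)) :=
        lintegral_le_of_geometric_shells (by norm_num) ht.le hq hcover hshell
    _ = _ := by
        rw [ENNReal.coe_mul_toNNReal]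
        refine ENNReal.mul_ofReal_mul_ofReal_eq (by positivity) (mul_nonneg (by positivity) hq') ?_
        rw [show -ε - σ = (1 - ε) + (-1 - σ) by ring, Real.rpow_add ht]
        ring

lemma exists_lintegral_logKernel_layer_le (h : IsW2Chart hN Ω s r ψ ψinv) {σ : ℝ}
    (hσ0 : 0 < σ) :
    ∃ C : ℝ≥0, ∀ x ∈ ball s r ∩ closure Ω, 0 < sdist Ω x →
      ∫⁻ y in ball s r ∩ closure Ω ∩ sdist Ω ⁻¹' Ioo 0 (sdist Ω x / 2),
        ENNReal.ofReal (logKernel Ω σ x y) ≤ C * ENNReal.ofReal (sdist Ω x ^ (-σ)) := by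
  obtain ⟨C, hC⟩ :=
    h.exists_lintegral_layer_sdist_rpow_mul_dist_rpow_le (ε := 2⁻¹) (by norm_num) (by norm_num) hσ0
  refine ⟨C * (2 * 2 ^ (2⁻¹ + σ) : ℝ).toNNReal, fun x hx hD => ?_⟩
  set D := sdist Ω x
  have hPm : MeasurableSet (ball s r ∩ closure Ω ∩ sdist Ω ⁻¹' Ioo 0 (D / 2)) :=
    (measurableSet_ball.inter measurableSet_closure).inter
      (continuous_sdist.measurable measurableSet_Ioo)
  have hsub : ball s r ∩ closure Ω ∩ sdist Ω ⁻¹' Ioo 0 (D / 2)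
      ⊆ ball s r ∩ sdist Ω ⁻¹' Ioo 0 (D / 2) ∩ {y | D / 2 ≤ dist y x} := fun y hy =>
    ⟨⟨hy.1.1, hy.2⟩, show D / 2 ≤ dist y x by
      linarith [sdist_le_sdist_add_dist hx.2 hy.1.2, dist_comm x y, hy.2.2]⟩
  have hpt : ∀ y ∈ ball s r ∩ closure Ω ∩ sdist Ω ⁻¹' Ioo 0 (D / 2),
      ENNReal.ofReal (logKernel Ω σ x y) ≤ ENNReal.ofReal (2 * D ^ (2⁻¹ : ℝ)) *
        ENNReal.ofReal (sdist Ω y ^ (-2⁻¹ : ℝ) * dist y x ^ (-((N : ℝ) + σ))) := fun y hy => by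
    rw [← ENNReal.ofReal_mul (by positivity), ← mul_assoc]
    refine ENNReal.ofReal_le_ofReal (mul_le_mul_of_nonneg_right (max_le ?_ ?_)
      (Real.rpow_nonneg dist_nonneg _))
    · exact (Real.log_sub_log_le_rpow_div (ε := 2⁻¹) hD hy.2.1 (by norm_num)).trans_eq (by ring)
    · exact mul_nonneg (by positivity) (Real.rpow_nonneg hy.2.1.le _)
  calc ∫⁻ y in ball s r ∩ closure Ω ∩ sdist Ω ⁻¹' Ioo 0 (D / 2), ENNReal.ofReal (logKernel Ω σ x y)
      ≤ ENNReal.ofReal (2 * D ^ (2⁻¹ : ℝ)) * ∫⁻ y in ball s r ∩ sdist Ω ⁻¹' Ioo 0 (D / 2) ∩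
          {y | D / 2 ≤ dist y x},
          ENNReal.ofReal (sdist Ω y ^ (-2⁻¹ : ℝ) * dist y x ^ (-((N : ℝ) + σ))) := by
        rw [← lintegral_const_mul' _ _ ENNReal.ofReal_ne_top]
        exact (setLIntegral_mono' hPm hpt).trans (lintegral_mono_set hsub)
    _ ≤ ENNReal.ofReal (2 * D ^ (2⁻¹ : ℝ)) * (C * ENNReal.ofReal ((D / 2) ^ (-2⁻¹ - σ))) := by
        gcongr
        exact hC x hx.1 _ (by positivity)
    _ = _ := by
        rw [mul_left_comm, ← mul_assoc, ENNReal.coe_mul_toNNReal]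
        refine ENNReal.mul_ofReal_mul_ofReal_eq (by positivity) (by positivity) ?_
        rw [Real.div_rpow hD.le zero_le_two, div_eq_mul_inv, ← Real.rpow_neg zero_le_two,
          show -(-2⁻¹ - σ) = 2⁻¹ + σ by ring,
          show D ^ (-σ) = D ^ (2⁻¹ : ℝ) * D ^ (-2⁻¹ - σ) by rw [← Real.rpow_add hD]; ring_nf]
        ring

lemma exists_lintegral_logKernel_le (h : IsW2Chart hN Ω s r ψ ψinv) (hΩ : IsOpen Ω)
    (hs : s ∈ frontier Ω) {σ : ℝ} (hσ0 : 0 < σ) (hσ1 : σ < 1) :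
    ∃ C : ℝ≥0, ∀ x ∈ ball s r ∩ Ω,
      ∫⁻ y in ball s r ∩ closure Ω, ENNReal.ofReal (logKernel Ω σ x y)
        ≤ C * ENNReal.ofReal (sdist Ω x ^ (-σ)) := by
  obtain ⟨C₁, h₁⟩ := exists_lintegral_logKernel_near_le hN hσ0 hσ1 Ω
  obtain ⟨C₂, h₂⟩ := exists_lintegral_logKernel_far_le hσ0 Ω r
  obtain ⟨C₃, h₃⟩ := h.exists_lintegral_logKernel_layer_le hσ0
  refine ⟨C₁ + C₂ + C₃, fun x hx => ?_⟩
  have hxcl : x ∈ closure Ω := subset_closure hx.2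
  have hD : 0 < sdist Ω x :=
    sdist_pos hΩ (closure_nonempty_iff.1 ⟨s, frontier_subset_closure (frontier_compl Ω ▸ hs)⟩) hx.2
  have hDr : sdist Ω x ≤ r :=
    (sdist_le_dist_of_mem_frontier hxcl hs).trans (mem_ball.1 hx.1).le
  set D := sdist Ω x
  have hcover : ball s r ∩ closure Ω
      ⊆ (closure Ω ∩ {y | D / 2 ≤ sdist Ω y} ∩ closedBall x D
        ∪ {y | D / 2 ≤ sdist Ω y ∨ sdist Ω y = 0} ∩ {y | D ≤ dist y x})
        ∪ ball s r ∩ closure Ω ∩ sdist Ω ⁻¹' Ioo 0 (D / 2) := by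
    intro y hy
    rcases le_or_gt (D / 2) (sdist Ω y) with hfar | hnear
    · rcases le_or_gt (dist y x) D with hclose | hclose
      · exact Or.inl (Or.inl ⟨⟨hy.2, hfar⟩, hclose⟩)
      · exact Or.inl (Or.inr ⟨Or.inl hfar, hclose.le⟩)
    · rcases (sdist_nonneg hy.2).eq_or_lt with hzero | hpos
      · refine Or.inl (Or.inr ⟨Or.inr hzero.symm, ?_⟩)
        show D ≤ dist y x
        linarith [sdist_le_sdist_add_dist hxcl hy.2, dist_comm x y]
      · exact Or.inr ⟨hy, hpos, hnear⟩
  calc ∫⁻ y in ball s r ∩ closure Ω, ENNReal.ofReal (logKernel Ω σ x y)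
      ≤ ∫⁻ y in (closure Ω ∩ {y | D / 2 ≤ sdist Ω y} ∩ closedBall x D
          ∪ {y | D / 2 ≤ sdist Ω y ∨ sdist Ω y = 0} ∩ {y | D ≤ dist y x})
          ∪ ball s r ∩ closure Ω ∩ sdist Ω ⁻¹' Ioo 0 (D / 2), ENNReal.ofReal (logKernel Ω σ x y) :=
        lintegral_mono_set hcover
    _ ≤ C₁ * ENNReal.ofReal (D ^ (-σ)) + C₂ * ENNReal.ofReal (D ^ (-σ))
          + C₃ * ENNReal.ofReal (D ^ (-σ)) :=
        (lintegral_union_le _ _ _).trans <| add_le_add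
          ((lintegral_union_le _ _ _).trans (add_le_add (h₁ x hxcl hD) (h₂ x hD hDr)))
          (h₃ x ⟨hx.1, hxcl⟩ hD)
    _ = ↑(C₁ + C₂ + C₃) * ENNReal.ofReal (D ^ (-σ)) := by push_cast; ring

end IsW2Chart

lemma lintegral_comp_jump_le {Ω : Set (Euc N)} {j : Euc N → Euc N → Euc N} {Aj : ℝ}
    (hJ0 : AssumptionJ0 Ω j Aj) {x : Euc N} (hx : x ∈ closure Ω) {S : Set (Euc N)}
    (hS : MeasurableSet S) (G : Euc N → ℝ≥0∞) :
    ∫⁻ z in S, G (x + j x z) ≤ ENNReal.ofReal (Aj ^ N) * ∫⁻ y in (x + j x ·) '' S, G y := by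
  obtain ⟨hj, hbij, hinv, hAj⟩ := hJ0 x hx
  refine lintegral_comp_le_of_one_le_mul_abs_det volume hS
    (fun z _ => ((hj.differentiable one_ne_zero z).hasFDerivAt.const_add x).hasFDerivWithinAt)
    (fun a _ b _ hab => hbij.1 (add_left_cancel hab)) (fun z _ => ?_) G
  simpa using one_le_pow_mul_abs_det_fderiv (leftInverse_invFun hbij.1)
    (hj.differentiable one_ne_zero z) (hinv.differentiable one_ne_zero _) (hAj _)

lemma jump_integrand_le_logKernel {Ω : Set (Euc N)} {g : Euc N → Euc N → ℝ} {Cμ σ : ℝ}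
    (hM : AssumptionM1 Ω g Cμ σ) {j : Euc N → Euc N → Euc N} {Cj' Cj Dj : ℝ}
    (hJ1 : AssumptionJ1 Ω j Cj' Cj Dj) {x : Euc N} (hx : x ∈ closure Ω) (z : Euc N) :
    (Real.log (sdist Ω x) - Real.log (sdist Ω (x + j x z))) * g x z
      ≤ Cμ * Cj ^ ((N : ℝ) + σ) * logKernel Ω σ x (x + j x z) := by
  obtain ⟨hCμ, hσ, -, hg0, hgle⟩ := hM
  obtain ⟨hCj', hCj, -, hj, -⟩ := hJ1
  rcases eq_or_ne z 0 with rfl | hz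
  · have hj0 : j x 0 = 0 := norm_le_zero_iff.1 (by simpa using (hj x hx 0).2)
    rw [hj0, add_zero, sub_self, zero_mul]
    exact mul_nonneg (by positivity) (logKernel_nonneg _ _ _ _)
  have hjz : 0 < ‖j x z‖ := (mul_pos hCj' (norm_pos_iff.2 hz)).trans_le (hj x hx z).1
  set a := Real.log (sdist Ω x) - Real.log (sdist Ω (x + j x z))
  calc a * g x z ≤ max a 0 * (Cμ * ‖z‖ ^ (-((N : ℝ) + σ))) :=
        mul_le_mul (le_max_left _ _) (hgle x hx z) (hg0 x hx z) (le_max_right _ _)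
    _ ≤ max a 0 * (Cμ * (Cj ^ ((N : ℝ) + σ) * ‖j x z‖ ^ (-((N : ℝ) + σ)))) := by
        gcongr
        exact Real.rpow_neg_le_mul_rpow_neg hjz (norm_nonneg z) hCj
          (add_nonneg (Nat.cast_nonneg N) hσ.1.le) (hj x hx z).2
    _ = Cμ * Cj ^ ((N : ℝ) + σ) * logKernel Ω σ x (x + j x z) := by
        rw [logKernel, dist_eq_norm, add_sub_cancel_left]
        ring

lemma ofReal_Iin_neg_log_sdist_add_le {Ω : Set (Euc N)} {g : Euc N → Euc N → ℝ} {Cμ σ : ℝ}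
    (hM : AssumptionM1 Ω g Cμ σ) {j : Euc N → Euc N → Euc N} {Aj : ℝ} (hJ0 : AssumptionJ0 Ω j Aj)
    {Cj' Cj Dj : ℝ} (hJ1 : AssumptionJ1 Ω j Cj' Cj Dj) {x : Euc N} (hx : x ∈ closure Ω)
    (ξ c : ℝ) :
    ENNReal.ofReal (Iin Ω j g ξ (fun y => -Real.log (sdist Ω y) + c) x)
      ≤ ENNReal.ofReal (Cμ * Cj ^ ((N : ℝ) + σ) * Aj ^ N) *
        ∫⁻ y in closedBall x (Cj * ξ) ∩ closure Ω, ENNReal.ofReal (logKernel Ω σ x y) := by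
  have hK : 0 ≤ Cμ * Cj ^ ((N : ℝ) + σ) := mul_nonneg hM.1.le (Real.rpow_nonneg hJ1.2.1.le _)
  set S := {z : Euc N | ‖z‖ < ξ ∧ x + j x z ∈ closure Ω}
  have hS : MeasurableSet S := (measurableSet_lt measurable_norm measurable_const).inter
    (measurableSet_closure.preimage ((hJ0 x hx).1.continuous.const_add x).measurable)
  have himage : (x + j x ·) '' S ⊆ closedBall x (Cj * ξ) ∩ closure Ω := by
    rintro _ ⟨z, hz, rfl⟩
    refine ⟨mem_closedBall.2 ?_, hz.2⟩
    rw [dist_eq_norm, add_sub_cancel_left]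
    exact (hJ1.2.2.2.1 x hx z).2.trans (by gcongr; exacts [hJ1.2.1.le, hz.1.le])
  calc ENNReal.ofReal (Iin Ω j g ξ (fun y => -Real.log (sdist Ω y) + c) x)
      ≤ ∫⁻ z in S, ENNReal.ofReal (Cμ * Cj ^ ((N : ℝ) + σ)) *
          ENNReal.ofReal (logKernel Ω σ x (x + j x z)) := by
        refine (ofReal_integral_le_lintegral_ofReal _ _).trans (lintegral_mono fun z => ?_)
        rw [← ENNReal.ofReal_mul hK]
        exact ENNReal.ofReal_le_ofReal
          ((jump_integrand_le_logKernel hM hJ1 hx z).trans_eq' (by ring))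
    _ ≤ ENNReal.ofReal (Cμ * Cj ^ ((N : ℝ) + σ)) * (ENNReal.ofReal (Aj ^ N) *
          ∫⁻ y in closedBall x (Cj * ξ) ∩ closure Ω, ENNReal.ofReal (logKernel Ω σ x y)) := by
        rw [lintegral_const_mul' _ _ ENNReal.ofReal_ne_top]
        gcongr
        exact (lintegral_comp_jump_le hJ0 hx hS
          (fun y => ENNReal.ofReal (logKernel Ω σ x y))).trans (by gcongr)
    _ = _ := by rw [ENNReal.ofReal_mul hK, mul_assoc]

theorem log_blowup_nonlocal_estimate_general
    (hN : 0 < N) (Ω : Set (Euc N)) (hΩ : IsW2Domain hN Ω)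
    (n : Euc N → Euc N)
    (g : Euc N → Euc N → ℝ) (Cμ Dμ σ : ℝ) (hM : AssumptionM Ω g Cμ Dμ σ)
    (j : Euc N → Euc N → Euc N) (Aj : ℝ) (hJ0 : AssumptionJ0 Ω j Aj)
    (Cj' Cj Dj : ℝ) (hJ1 : AssumptionJ1 Ω j Cj' Cj Dj)
    {A : Type}
    (b : Euc N → A → Euc N)
    (x₀ : Euc N) (hx₀ : x₀ ∈ GammaIn Ω n b)
    (r : ℝ) (ψ ψinv : Euc N → Euc N) (hchart : IsW2Chart hN Ω x₀ r ψ ψinv) :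
    ∃ Acst > (0:ℝ), ∀ ξ : ℝ, 0 < ξ → ξ ≤ Cj⁻¹ * r / 2 →
      ∀ x ∈ ball x₀ (r / 2) ∩ Ω,
        Iin Ω j g ξ (fun y => -Real.log (sdist Ω y) + (3 / 2) * Real.log r) x ≤
          Acst * sdist Ω x ^ (-σ) := by
  obtain ⟨C, hC⟩ := hchart.exists_lintegral_logKernel_le hΩ.1 hx₀.1 hM.1.2.1.1 hM.1.2.1.2
  set K := Cμ * Cj ^ ((N : ℝ) + σ) * Aj ^ N
  refine ⟨(C * K.toNNReal : ℝ≥0) + 1, by positivity, fun ξ hξ hξr x hx => ?_⟩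
  have hxcl : x ∈ closure Ω := subset_closure hx.2
  have hd : 0 ≤ sdist Ω x ^ (-σ) := Real.rpow_nonneg (sdist_nonneg hxcl) _
  have hCjξ : Cj * ξ ≤ r / 2 := (mul_le_mul_of_nonneg_left hξr hJ1.2.1.le).trans_eq
    (by field_simp [hJ1.2.1.ne'])
  have hball : closedBall x (Cj * ξ) ∩ closure Ω ⊆ ball x₀ r ∩ closure Ω :=
    inter_subset_inter_left _ (closedBall_subset_ball' (by linarith [mem_ball.1 hx.1]))
  have hI : ENNReal.ofReal (Iin Ω j g ξ (fun y => -Real.log (sdist Ω y) + (3 / 2) * Real.log r) x)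
      ≤ ENNReal.ofReal ((C * K.toNNReal : ℝ≥0) * sdist Ω x ^ (-σ)) :=
    calc _ ≤ ENNReal.ofReal K *
            ∫⁻ y in closedBall x (Cj * ξ) ∩ closure Ω, ENNReal.ofReal (logKernel Ω σ x y) :=
          ofReal_Iin_neg_log_sdist_add_le hM.1 hJ0 hJ1 hxcl ξ _
      _ ≤ ENNReal.ofReal K * (C * ENNReal.ofReal (sdist Ω x ^ (-σ))) := by
          gcongr
          exact (lintegral_mono_set hball).trans
            (hC x ⟨ball_subset_ball (by linarith [hchart.1]) hx.1, hx.2⟩)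
      _ = _ := by
          rw [ENNReal.ofReal_mul NNReal.zero_le_coe, ENNReal.ofReal_coe_nnreal,
            ENNReal.coe_mul_toNNReal]
          ring
  calc Iin Ω j g ξ (fun y => -Real.log (sdist Ω y) + (3 / 2) * Real.log r) x
      ≤ (C * K.toNNReal : ℝ≥0) * sdist Ω x ^ (-σ) :=
        (ENNReal.ofReal_le_ofReal_iff (mul_nonneg NNReal.zero_le_coe hd)).1 hI
    _ ≤ _ := mul_le_mul_of_nonneg_right (by linarith) hd

/-- **Nonlocal estimate on the logarithmic blow-up function (first part of Lemma `blow`).**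
Under (O), (M), (J0), (J1), for `x̄ ∈ Γ_in` with boundary chart of radius `r` at `x̄`, the
function `U_r(x) = -log d(x) + (3/2) log r` satisfies
`I_ξ[U_r](x) ≤ A d(x)^{-σ}` on `B_{r/2}(x̄) ∩ Ω`, for all `0 < ξ ≤ C_j⁻¹ r / 2`,
for some constant `A > 0`. -/
theorem log_blowup_nonlocal_estimate
    (hN : 0 < N) (Ω : Set (Euc N)) (hΩ : IsW2Domain hN Ω)
    (n : Euc N → Euc N) (hn : IsExteriorNormal Ω n)
    (g : Euc N → Euc N → ℝ) (Cμ Dμ σ : ℝ) (hM : AssumptionM Ω g Cμ Dμ σ)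
    (j : Euc N → Euc N → Euc N) (Aj : ℝ) (hJ0 : AssumptionJ0 Ω j Aj)
    (Cj' Cj Dj : ℝ) (hJ1 : AssumptionJ1 Ω j Cj' Cj Dj)
    {A : Type} [MetricSpace A] [CompactSpace A] [Nonempty A]
    (b : Euc N → A → Euc N)
    (hbc : Continuous (fun q : Euc N × A => b q.1 q.2)) (hbb : ∃ M, ∀ x α, ‖b x α‖ ≤ M)
    (x₀ : Euc N) (hx₀ : x₀ ∈ GammaIn Ω n b)
    (r : ℝ) (ψ ψinv : Euc N → Euc N) (hchart : IsW2Chart hN Ω x₀ r ψ ψinv) :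
    ∃ Acst > (0:ℝ), ∀ ξ : ℝ, 0 < ξ → ξ ≤ Cj⁻¹ * r / 2 →
      ∀ x ∈ ball x₀ (r / 2) ∩ Ω,
        Iin Ω j g ξ (fun y => -Real.log (sdist Ω y) + (3 / 2) * Real.log r) x ≤
          Acst * sdist Ω x ^ (-σ) :=
  log_blowup_nonlocal_estimate_general hN Ω hΩ n g Cμ Dμ σ hM j Aj hJ0 Cj' Cj Dj hJ1 b x₀ hx₀ r ψ
    ψinv hchart

end Censored

end
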